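/- arXiv:2004.02050 — 8 statements merged into one kernel-verified Lean document; each statement's English description precedes it below -/
import Mathlib

section
/- Let $b > 0$, $r \ge 0$, and suppose $y : [0,1] \to (0,\infty)$ is absolutely continuous (differentiable) and satisfies $y'(s) \le r\,y(s) - b\,y(s)\ln y(s)$ for all $s$, with $y(0) = y_0 > 0$. Then for all $0 \le s \le 1$, $y(s) \le \exp\left(\frac{r}{b}(1 - e^{-bs})\right) y_0^{e^{-bs}}$. -/
/-! With `ζ(s) = e^{bs} log y(s)` the inequality `y' ≤ r y - b y log y` becomes `ζ' ≤ r e^{bs}`,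
so `ζ(s) ≤ ζ(0) + (r / b) (e^{bs} - 1)`; dividing by `e^{bs}` and exponentiating gives the bound. -/

open Real Set

theorem hasDerivAt_exp_const_mul (b t : ℝ) :
    HasDerivAt (fun u => exp (b * u)) (b * exp (b * t)) t := by
  simpa [mul_comm] using ((hasDerivAt_id t).const_mul b).exp

theorem hasDerivAt_exp_mul_log {y : ℝ → ℝ} {y₁ b t : ℝ} (hy : HasDerivAt y y₁ t)
    (hpos : 0 < y t) :
    HasDerivAt (fun u => exp (b * u) * log (y u))
      (exp (b * t) * (b * log (y t) + y₁ / y t)) t :=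
  ((hasDerivAt_exp_const_mul b t).mul (hy.log hpos.ne')).congr_deriv (by ring)

theorem exp_mul_deriv_log_le_of_le_logistic {y₀ y₁ b r t : ℝ} (hy₀ : 0 < y₀)
    (h : y₁ ≤ r * y₀ - b * y₀ * log y₀) :
    exp (b * t) * (b * log y₀ + y₁ / y₀) ≤ r * exp (b * t) := by
  have hdiv : y₁ / y₀ ≤ r - b * log y₀ := by
    rw [div_le_iff₀ hy₀]
    linarith
  nlinarith [exp_pos (b * t)]

theorem exp_mul_log_le_of_deriv_le_logistic {y y' : ℝ → ℝ} {a c b r : ℝ} (hb : b ≠ 0)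
    (hpos : ∀ s ∈ Icc a c, 0 < y s)
    (hderiv : ∀ s ∈ Icc a c, HasDerivAt y (y' s) s)
    (hineq : ∀ s ∈ Icc a c, y' s ≤ r * y s - b * y s * log (y s)) :
    ∀ s ∈ Icc a c,
      exp (b * s) * log (y s) ≤ exp (b * a) * log (y a) + r / b * (exp (b * s) - exp (b * a)) := by
  have hζ : ∀ s ∈ Icc a c, HasDerivAt (fun u => exp (b * u) * log (y u))
      (exp (b * s) * (b * log (y s) + y' s / y s)) s :=
    fun s hs => hasDerivAt_exp_mul_log (hderiv s hs) (hpos s hs)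
  have hB : ∀ s, HasDerivAt (fun u => exp (b * a) * log (y a) + r / b * (exp (b * u) - exp (b * a)))
      (r * exp (b * s)) s := by
    intro s
    refine ((((hasDerivAt_exp_const_mul b s).sub_const (exp (b * a))).const_mul
      (r / b)).const_add (exp (b * a) * log (y a))).congr_deriv ?_
    field_simp
  refine image_le_of_deriv_right_le_deriv_boundary
    (fun s hs => (hζ s hs).continuousAt.continuousWithinAt)
    (fun s hs => (hζ s (Ico_subset_Icc_self hs)).hasDerivWithinAt) (by simp)
    (fun s _ => (hB s).continuousAt.continuousWithinAt) (fun s _ => (hB s).hasDerivWithinAt)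
    (fun s hs => ?_)
  have hs' := Ico_subset_Icc_self hs
  exact exp_mul_deriv_log_le_of_le_logistic (hpos s hs') (hineq s hs')

theorem stmt_1_general (b r : ℝ) (hb : 0 < b)
    (y y' : ℝ → ℝ)
    (hpos : ∀ s ∈ Set.Icc (0:ℝ) 1, 0 < y s)
    (hderiv : ∀ s ∈ Set.Icc (0:ℝ) 1, HasDerivAt y (y' s) s)
    (hineq : ∀ s ∈ Set.Icc (0:ℝ) 1, y' s ≤ r * y s - b * y s * Real.log (y s)) :
    ∀ s ∈ Set.Icc (0:ℝ) 1,
      y s ≤ Real.exp (r / b * (1 - Real.exp (-b * s))) * (y 0) ^ Real.exp (-b * s) := by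
  intro s hs
  have hζ := exp_mul_log_le_of_deriv_le_logistic hb.ne' hpos hderiv hineq s hs
  simp only [mul_zero, exp_zero, one_mul] at hζ
  have hlog : log (y s) ≤ r / b * (1 - exp (-b * s)) + exp (-b * s) * log (y 0) := by
    have hinv : exp (-b * s) * exp (b * s) = 1 := by rw [← exp_add]; simp
    have hscaled := mul_le_mul_of_nonneg_left hζ (exp_pos (-b * s)).le
    linear_combination hscaled - (log (y s) - r / b) * hinv
  calc y s = exp (log (y s)) := (exp_log (hpos s hs)).symm
    _ ≤ exp (r / b * (1 - exp (-b * s)) + exp (-b * s) * log (y 0)) := exp_le_exp.mpr hlog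
    _ = exp (r / b * (1 - exp (-b * s))) * y 0 ^ exp (-b * s) := by
        rw [exp_add, rpow_def_of_pos (hpos 0 (by simp)), mul_comm (log (y 0))]

/-- Gronwall-type lemma: if `y : [0,1] → (0,∞)` satisfies
`y' ≤ r y - b y ln y` with `y 0 = y₀ > 0`, then
`y s ≤ exp((r/b)(1 - e^{-bs})) y₀^{e^{-bs}}` for `0 ≤ s ≤ 1`. -/
theorem stmt_1 (b r : ℝ) (hb : 0 < b) (hr : 0 ≤ r)
    (y y' : ℝ → ℝ)
    (hpos : ∀ s ∈ Set.Icc (0:ℝ) 1, 0 < y s)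
    (hderiv : ∀ s ∈ Set.Icc (0:ℝ) 1, HasDerivAt y (y' s) s)
    (hineq : ∀ s ∈ Set.Icc (0:ℝ) 1, y' s ≤ r * y s - b * y s * Real.log (y s)) :
    ∀ s ∈ Set.Icc (0:ℝ) 1,
      y s ≤ Real.exp (r / b * (1 - Real.exp (-b * s))) * (y 0) ^ Real.exp (-b * s) :=
  stmt_1_general b r hb y y' hpos hderiv hineq
end

section
/- Let $(X, \mathcal{B})$ be a measurable space, $P$ a Markov kernel on $X$, and $m$ a $\sigma$-finite measure such that $\delta_x P$ and $\delta_y P$ have densities $p_x, p_y$ with respect to $m$. Then for every bounded measurable $f : X \to \mathbb{R}$, $|Pf(x) - Pf(y)|^2 \le 2\, \mathsf{He}_2(\delta_x P, \delta_y P)^2 \,\big(P(f^2)(x) + P(f^2)(y)\big)$, where $\mathsf{He}_2(\mu_0,\mu_1)^2 = \int (\sqrt{p_x} - \sqrt{p_y})^2\, dm$ is the squared Hellinger distance. -/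
/-!
Since `p - q = (√p - √q) (√p + √q)`, the difference `Pf(x) - Pf(y) = ∫ (px - py) f dm` is the
`L²(m)` pairing of `√px - √py` with `f (√px + √py)`. Cauchy–Schwarz bounds its square by the
squared Hellinger distance times `∫ f² (√px + √py)² dm ≤ 2 ∫ f² (px + py) dm`.
-/

open MeasureTheory ProbabilityTheory

theorem sq_sqrt_sub_sqrt_le {a b : ℝ} (ha : 0 ≤ a) (hb : 0 ≤ b) :
    (√a - √b) ^ 2 ≤ a + b := by
  nlinarith [Real.sq_sqrt ha, Real.sq_sqrt hb, Real.sqrt_nonneg a, Real.sqrt_nonneg b]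

theorem sq_sqrt_add_sqrt_le {a b : ℝ} (ha : 0 ≤ a) (hb : 0 ≤ b) :
    (√a + √b) ^ 2 ≤ 2 * (a + b) := by
  nlinarith [Real.sq_sqrt ha, Real.sq_sqrt hb, sq_nonneg (√a - √b)]

theorem sub_eq_sqrt_sub_sqrt_mul_sqrt_add_sqrt {a b : ℝ} (ha : 0 ≤ a) (hb : 0 ≤ b) :
    a - b = (√a - √b) * (√a + √b) := by
  nlinarith [Real.sq_sqrt ha, Real.sq_sqrt hb]

section

variable {X : Type*} [MeasurableSpace X] {μ : Measure X} {p q f : X → ℝ}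

theorem integral_withDensity_ofReal (hp : Measurable p) (hp0 : ∀ z, 0 ≤ p z) (g : X → ℝ) :
    ∫ z, g z ∂(μ.withDensity fun z => ENNReal.ofReal (p z)) = ∫ z, p z * g z ∂μ := by
  rw [integral_withDensity_eq_integral_toReal_smul hp.ennreal_ofReal
    (ae_of_all _ fun _ => ENNReal.ofReal_lt_top)]
  simp only [ENNReal.toReal_ofReal (hp0 _), smul_eq_mul]

theorem integrable_withDensity_ofReal_iff (hp : Measurable p) (hp0 : ∀ z, 0 ≤ p z)
    {g : X → ℝ} :
    Integrable g (μ.withDensity fun z => ENNReal.ofReal (p z)) ↔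
      Integrable (fun z => p z * g z) μ := by
  rw [integrable_withDensity_iff_integrable_smul' hp.ennreal_ofReal
    (ae_of_all _ fun _ => ENNReal.ofReal_lt_top)]
  simp only [ENNReal.toReal_ofReal (hp0 _), smul_eq_mul]

theorem sq_integral_mul_le_integral_sq_mul_integral_sq {g h : X → ℝ} (hg : MemLp g 2 μ)
    (hh : MemLp h 2 μ) :
    (∫ z, g z * h z ∂μ) ^ 2 ≤ (∫ z, g z ^ 2 ∂μ) * ∫ z, h z ^ 2 ∂μ := by
  have inner_toLp : ∀ {u v : X → ℝ} (hu : MemLp u 2 μ) (hv : MemLp v 2 μ),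
      inner ℝ (hu.toLp u) (hv.toLp v) = ∫ z, u z * v z ∂μ := fun hu hv => by
    rw [L2.inner_def]
    refine integral_congr_ae ?_
    filter_upwards [hu.coeFn_toLp, hv.coeFn_toLp] with z hu hv
    simp [hu, hv, mul_comm]
  simpa only [inner_toLp, sq] using real_inner_mul_inner_self_le (hg.toLp g) (hh.toLp h)

theorem sq_integral_sub_mul_le_hellinger (hp0 : ∀ z, 0 ≤ p z) (hq0 : ∀ z, 0 ≤ q z)
    (hp : Integrable p μ) (hq : Integrable q μ) (hf : AEStronglyMeasurable f μ)
    (hpf : Integrable (fun z => p z * f z ^ 2) μ) (hqf : Integrable (fun z => q z * f z ^ 2) μ) :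
    (∫ z, (p z - q z) * f z ∂μ) ^ 2 ≤
      2 * (∫ z, (√(p z) - √(q z)) ^ 2 ∂μ) *
        ((∫ z, p z * f z ^ 2 ∂μ) + ∫ z, q z * f z ^ 2 ∂μ) := by
  set g : X → ℝ := fun z => √(p z) - √(q z)
  set h : X → ℝ := fun z => f z * (√(p z) + √(q z))
  have hp' := Real.continuous_sqrt.comp_aestronglyMeasurable hp.aestronglyMeasurable
  have hq' := Real.continuous_sqrt.comp_aestronglyMeasurable hq.aestronglyMeasurable
  have hg2_le : ∀ z, g z ^ 2 ≤ p z + q z := fun z => sq_sqrt_sub_sqrt_le (hp0 z) (hq0 z)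
  have hh2_le : ∀ z, h z ^ 2 ≤ 2 * (p z * f z ^ 2 + q z * f z ^ 2) := fun z => by
    have := mul_le_mul_of_nonneg_left (sq_sqrt_add_sqrt_le (hp0 z) (hq0 z)) (sq_nonneg (f z))
    simp only [h]; linarith
  have hg2 : Integrable (fun z => g z ^ 2) μ :=
    (hp.add hq).mono' ((hp'.sub hq').pow 2) (ae_of_all _ fun z => by
      rw [Real.norm_of_nonneg (sq_nonneg _)]; exact hg2_le z)
  have hh2 : Integrable (fun z => h z ^ 2) μ :=
    ((hpf.add hqf).const_mul 2).mono' ((hf.mul (hp'.add hq')).pow 2) (ae_of_all _ fun z => by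
      rw [Real.norm_of_nonneg (sq_nonneg _)]; exact hh2_le z)
  have hgh : ∫ z, (p z - q z) * f z ∂μ = ∫ z, g z * h z ∂μ := by
    refine integral_congr_ae (ae_of_all _ fun z => ?_)
    dsimp only [g, h]
    rw [sub_eq_sqrt_sub_sqrt_mul_sqrt_add_sqrt (hp0 z) (hq0 z)]
    ring
  have hh2_int_le :
      ∫ z, h z ^ 2 ∂μ ≤ 2 * ((∫ z, p z * f z ^ 2 ∂μ) + ∫ z, q z * f z ^ 2 ∂μ) := by
    rw [← integral_add hpf hqf, ← integral_const_mul]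
    exact integral_mono hh2 ((hpf.add hqf).const_mul 2) hh2_le
  calc (∫ z, (p z - q z) * f z ∂μ) ^ 2
      ≤ (∫ z, g z ^ 2 ∂μ) * ∫ z, h z ^ 2 ∂μ := by
        rw [hgh]
        exact sq_integral_mul_le_integral_sq_mul_integral_sq
          ((memLp_two_iff_integrable_sq (hp'.sub hq')).2 hg2)
          ((memLp_two_iff_integrable_sq (hf.mul (hp'.add hq'))).2 hh2)
    _ ≤ _ := by
        rw [mul_comm 2, mul_assoc]
        exact mul_le_mul_of_nonneg_left hh2_int_le (integral_nonneg fun z => sq_nonneg _)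

end

theorem stmt_3_general {X : Type*} [MeasurableSpace X]
    (P : Kernel X X) [IsMarkovKernel P]
    (m : Measure X)
    (x y : X) (px py : X → ℝ)
    (hpx_meas : Measurable px) (hpy_meas : Measurable py)
    (hpx_nonneg : ∀ z, 0 ≤ px z) (hpy_nonneg : ∀ z, 0 ≤ py z)
    (hpx : P x = m.withDensity (fun z => ENNReal.ofReal (px z)))
    (hpy : P y = m.withDensity (fun z => ENNReal.ofReal (py z)))
    (f : X → ℝ) (hf : Measurable f) (M : ℝ) (hfb : ∀ z, |f z| ≤ M) :
    |∫ z, f z ∂(P x) - ∫ z, f z ∂(P y)| ^ 2 ≤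
      2 * (∫ z, (Real.sqrt (px z) - Real.sqrt (py z)) ^ 2 ∂m) *
        ((∫ z, (f z) ^ 2 ∂(P x)) + ∫ z, (f z) ^ 2 ∂(P y)) := by
  have hf_int : ∀ w, Integrable f (P w) := fun w =>
    .of_bound hf.aestronglyMeasurable M
      (ae_of_all _ fun z => (Real.norm_eq_abs _).trans_le (hfb z))
  have hf2_int : ∀ w, Integrable (fun z => f z ^ 2) (P w) := fun w =>
    .of_bound (hf.pow_const 2).aestronglyMeasurable (M ^ 2) (ae_of_all _ fun z => by
      rw [Real.norm_of_nonneg (sq_nonneg _), ← sq_abs]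
      exact pow_le_pow_left₀ (abs_nonneg _) (hfb z) 2)
  have transfer : ∀ {w p}, Measurable p → (∀ z, 0 ≤ p z) →
      P w = m.withDensity (fun z => ENNReal.ofReal (p z)) →
      Integrable p m ∧ Integrable (fun z => p z * f z) m ∧
        Integrable (fun z => p z * f z ^ 2) m := by
    intro w p hp hp0 hPw
    simp only [← integrable_withDensity_ofReal_iff hp hp0, ← hPw]
    refine ⟨?_, hf_int w, hf2_int w⟩
    simpa using (integrable_withDensity_ofReal_iff hp hp0 (μ := m) (g := fun _ => (1 : ℝ))).1
      (hPw ▸ integrable_const 1)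
  obtain ⟨hpx_int, hpxf, hpxf2⟩ := transfer hpx_meas hpx_nonneg hpx
  obtain ⟨hpy_int, hpyf, hpyf2⟩ := transfer hpy_meas hpy_nonneg hpy
  have hdiff : ∫ z, f z ∂(P x) - ∫ z, f z ∂(P y) = ∫ z, (px z - py z) * f z ∂m := by
    rw [hpx, hpy, integral_withDensity_ofReal hpx_meas hpx_nonneg,
      integral_withDensity_ofReal hpy_meas hpy_nonneg, ← integral_sub hpxf hpyf]
    simp only [sub_mul]
  rw [sq_abs, hdiff, hpx, hpy, integral_withDensity_ofReal hpx_meas hpx_nonneg,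
    integral_withDensity_ofReal hpy_meas hpy_nonneg]
  exact sq_integral_sub_mul_le_hellinger hpx_nonneg hpy_nonneg hpx_int hpy_int
    hf.aestronglyMeasurable hpxf2 hpyf2

/-- Lemma 3.7: for a Markov kernel `P` whose transition measures from `x` and `y`
have densities `px, py` w.r.t. a common σ-finite measure `m`, and any bounded
measurable `f`,
`|Pf(x) - Pf(y)|² ≤ 2 He₂(δₓP, δᵧP)² (P(f²)(x) + P(f²)(y))`. -/
theorem stmt_3 {X : Type*} [MeasurableSpace X]
    (P : Kernel X X) [IsMarkovKernel P]
    (m : Measure X) [SigmaFinite m]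
    (x y : X) (px py : X → ℝ)
    (hpx_meas : Measurable px) (hpy_meas : Measurable py)
    (hpx_nonneg : ∀ z, 0 ≤ px z) (hpy_nonneg : ∀ z, 0 ≤ py z)
    (hpx : P x = m.withDensity (fun z => ENNReal.ofReal (px z)))
    (hpy : P y = m.withDensity (fun z => ENNReal.ofReal (py z)))
    (f : X → ℝ) (hf : Measurable f) (M : ℝ) (hfb : ∀ z, |f z| ≤ M) :
    |∫ z, f z ∂(P x) - ∫ z, f z ∂(P y)| ^ 2 ≤
      2 * (∫ z, (Real.sqrt (px z) - Real.sqrt (py z)) ^ 2 ∂m) *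
        ((∫ z, (f z) ^ 2 ∂(P x)) + ∫ z, (f z) ^ 2 ∂(P y)) :=
  stmt_3_general P m x y px py hpx_meas hpy_meas hpx_nonneg hpy_nonneg hpx hpy f hf M hfb
end

section
/- Let $b > 0$, $p = e^b$, $q = p/(p-1)$, $C_b = p^{1-q}/q$. Let $\mu_0, \mu_1$ be probability measures on a measurable space with $\mu_1 \ll \mu_0$ and density $\varrho = d\mu_1/d\mu_0$. Then for every measurable $\varphi_0 > 0$ bounded and bounded away from $0$, and any $\varphi_1$ satisfying $\varphi_1 \le \varphi_0^{1/p}$ pointwise, we have $\int \varphi_1 \, d\mu_1 - \int \varphi_0 \, d\mu_0 \le C_b \int \varrho^q \, d\mu_0$. -/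
/-!
Writing `ϱ = dμ₁/dμ₀`, the left-hand side is at most `∫ (φ₀ ^ (1/p) ϱ - φ₀) dμ₀`. Young's
inequality applied to `(p x) ^ (1/p)` and `p ^ (-1/p) z` bounds `x ^ (1/p) z - x` by
`C_b z ^ q`, pointwise in `x = φ₀` and `z = ϱ`; the same bound dominates `φ₀ ^ (1/p) ϱ` by
`φ₀ + C_b ϱ ^ q`, which makes it integrable.
-/

open MeasureTheory

lemma Real.rpow_one_div_mul_sub_le {p q x z : ℝ} (hpq : p.HolderConjugate q) (hx : 0 ≤ x)
    (hz : 0 ≤ z) : x ^ (1 / p) * z - x ≤ p ^ (1 - q) / q * z ^ q := by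
  have hp : 0 < p := hpq.pos
  have young := Real.young_inequality_of_nonneg (a := (p * x) ^ (1 / p))
    (b := p ^ (-(1 / p)) * z) (by positivity) (by positivity) hpq
  have ha : ((p * x) ^ (1 / p)) ^ p = p * x := by
    rw [← Real.rpow_mul (by positivity), one_div_mul_cancel hp.ne', Real.rpow_one]
  have hab : (p * x) ^ (1 / p) * (p ^ (-(1 / p)) * z) = x ^ (1 / p) * z := by
    rw [Real.mul_rpow hp.le hx, Real.rpow_neg hp.le]
    field_simp
  have hb : (p ^ (-(1 / p)) * z) ^ q = p ^ (1 - q) * z ^ q := by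
    have hexp : -(1 / p) * q = 1 - q := by
      have := hpq.sub_one_mul_conj
      field_simp
      linear_combination this
    rw [Real.mul_rpow (by positivity) hz, ← Real.rpow_mul hp.le, hexp]
  rw [ha, hab, hb, mul_div_cancel_left₀ x hp.ne', ← div_mul_eq_mul_div] at young
  linarith

lemma ENNReal.ofReal_integral_toReal_rpow {X : Type*} [MeasurableSpace X] {μ : Measure X}
    {f : X → ENNReal} (hf : AEMeasurable f μ) {q : ℝ} (hfq : ∫⁻ x, f x ^ q ∂μ ≠ ⊤) :
    ENNReal.ofReal (∫ x, (f x).toReal ^ q ∂μ) = ∫⁻ x, f x ^ q ∂μ := by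
  simp_rw [ENNReal.toReal_rpow]
  rw [integral_toReal (hf.pow_const q) (ae_lt_top' (hf.pow_const q) hfq),
    ENNReal.ofReal_toReal hfq]

lemma integrable_toReal_rpow_of_lintegral_ne_top {X : Type*} [MeasurableSpace X]
    {μ : Measure X} {f : X → ENNReal} (hf : AEMeasurable f μ) {q : ℝ}
    (hfq : ∫⁻ x, f x ^ q ∂μ ≠ ⊤) : Integrable (fun x => (f x).toReal ^ q) μ := by
  simp_rw [ENNReal.toReal_rpow]
  exact integrable_toReal_of_lintegral_ne_top (hf.pow_const q) hfq

theorem integral_sub_integral_le_mul_integral_rnDeriv_rpow {X : Type*} [MeasurableSpace X]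
    {μ0 μ1 : Measure X} [μ1.HaveLebesgueDecomposition μ0] [SigmaFinite μ1] (hac : μ1 ≪ μ0)
    {p q : ℝ} (hpq : p.HolderConjugate q) {φ0 φ1 : X → ℝ} (hφ0_meas : Measurable φ0)
    (hφ0_nonneg : ∀ z, 0 ≤ φ0 z) (hφ0_int : Integrable φ0 μ0) (hφ1_int : Integrable φ1 μ1)
    (h1 : ∀ z, φ1 z ≤ φ0 z ^ (1 / p))
    (hϱq_int : Integrable (fun z => (μ1.rnDeriv μ0 z).toReal ^ q) μ0) :
    (∫ z, φ1 z ∂μ1) - ∫ z, φ0 z ∂μ0 ≤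
      p ^ (1 - q) / q * ∫ z, (μ1.rnDeriv μ0 z).toReal ^ q ∂μ0 := by
  set ϱ : X → ℝ := fun z => (μ1.rnDeriv μ0 z).toReal
  have young (z : X) : ϱ z * φ0 z ^ (1 / p) - φ0 z ≤ p ^ (1 - q) / q * ϱ z ^ q :=
    mul_comm (ϱ z) _ ▸ Real.rpow_one_div_mul_sub_le hpq (hφ0_nonneg z) ENNReal.toReal_nonneg
  have hdom_int : Integrable (fun z => φ0 z + p ^ (1 - q) / q * ϱ z ^ q) μ0 :=
    hφ0_int.add (hϱq_int.const_mul _)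
  have hψϱ_int : Integrable (fun z => ϱ z * φ0 z ^ (1 / p)) μ0 := by
    refine hdom_int.mono' ?_ (.of_forall fun z => ?_)
    · exact ((Measure.measurable_rnDeriv μ1 μ0).ennreal_toReal.mul
        (hφ0_meas.pow_const _)).aestronglyMeasurable
    · rw [Real.norm_of_nonneg
        (mul_nonneg ENNReal.toReal_nonneg (Real.rpow_nonneg (hφ0_nonneg z) _))]
      linarith [young z]
  have hψ_int : Integrable (fun z => φ0 z ^ (1 / p)) μ1 :=
    (integrable_toReal_rnDeriv_mul_iff hac).1 hψϱ_int
  calc (∫ z, φ1 z ∂μ1) - ∫ z, φ0 z ∂μ0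
      ≤ (∫ z, φ0 z ^ (1 / p) ∂μ1) - ∫ z, φ0 z ∂μ0 := by
        gcongr ?_ - _
        exact integral_mono hφ1_int hψ_int h1
    _ = ∫ z, (ϱ z * φ0 z ^ (1 / p) - φ0 z) ∂μ0 := by
        rw [← integral_toReal_rnDeriv_mul hac, integral_sub hψϱ_int hφ0_int]
    _ ≤ ∫ z, p ^ (1 - q) / q * ϱ z ^ q ∂μ0 :=
        integral_mono (hψϱ_int.sub hφ0_int) (hϱq_int.const_mul _) young
    _ = p ^ (1 - q) / q * ∫ z, ϱ z ^ q ∂μ0 := integral_const_mul _ _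

theorem stmt_8_general {X : Type*} [MeasurableSpace X]
    (μ0 μ1 : Measure X) [IsProbabilityMeasure μ0] [IsProbabilityMeasure μ1]
    (hac : μ1 ≪ μ0)
    (b p q Cb : ℝ) (hb : 0 < b) (hp : p = Real.exp b) (hq : q = p / (p - 1))
    (hCb : Cb = p ^ (1 - q) / q)
    (φ0 φ1 : X → ℝ) (hφ0_meas : Measurable φ0)
    (ε M : ℝ) (hε : 0 < ε) (hφ0_lb : ∀ z, ε ≤ φ0 z) (hφ0_ub : ∀ z, φ0 z ≤ M)
    (hφ1_int : Integrable φ1 μ1)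
    (h1 : ∀ z, φ1 z ≤ (φ0 z) ^ (1 / p)) :
    ENNReal.ofReal ((∫ z, φ1 z ∂μ1) - ∫ z, φ0 z ∂μ0) ≤
      ENNReal.ofReal Cb * ∫⁻ z, (μ1.rnDeriv μ0 z) ^ q ∂μ0 := by
  have hpq : p.HolderConjugate q := hq ▸ .conjExponent (hp ▸ Real.one_lt_exp_iff.2 hb)
  have hCb_pos : 0 < Cb := hCb ▸ div_pos (Real.rpow_pos_of_pos hpq.pos _) hpq.symm.pos
  have hϱ_meas : AEMeasurable (μ1.rnDeriv μ0) μ0 :=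
    (Measure.measurable_rnDeriv μ1 μ0).aemeasurable
  by_cases htop : ∫⁻ z, (μ1.rnDeriv μ0 z) ^ q ∂μ0 = ⊤
  · simp [htop, ENNReal.mul_top (ENNReal.ofReal_pos.2 hCb_pos).ne']
  have hφ0_nonneg (z : X) : 0 ≤ φ0 z := hε.le.trans (hφ0_lb z)
  have hφ0_int : Integrable φ0 μ0 := .of_bound hφ0_meas.aestronglyMeasurable M
    (.of_forall fun z => by rw [Real.norm_of_nonneg (hφ0_nonneg z)]; exact hφ0_ub z)
  have hreal := integral_sub_integral_le_mul_integral_rnDeriv_rpow hac hpq hφ0_meas hφ0_nonneg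
    hφ0_int hφ1_int h1 (integrable_toReal_rpow_of_lintegral_ne_top hϱ_meas htop)
  rw [← hCb] at hreal
  calc ENNReal.ofReal ((∫ z, φ1 z ∂μ1) - ∫ z, φ0 z ∂μ0)
      ≤ ENNReal.ofReal (Cb * ∫ z, (μ1.rnDeriv μ0 z).toReal ^ q ∂μ0) :=
        ENNReal.ofReal_le_ofReal hreal
    _ = ENNReal.ofReal Cb * ∫⁻ z, (μ1.rnDeriv μ0 z) ^ q ∂μ0 := by
        rw [ENNReal.ofReal_mul hCb_pos.le, ENNReal.ofReal_integral_toReal_rpow hϱ_meas htop]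

/-- Upper-bound half of Proposition 5.10: if `μ1 ≪ μ0` with density `ϱ`, `φ0` is
bounded and bounded away from `0`, and `φ1 ≤ φ0^{1/p}` pointwise, then
`∫ φ1 dμ1 - ∫ φ0 dμ0 ≤ C_b ∫ ϱ^q dμ0`. -/
theorem stmt_8 {X : Type*} [MeasurableSpace X]
    (μ0 μ1 : Measure X) [IsProbabilityMeasure μ0] [IsProbabilityMeasure μ1]
    (hac : μ1 ≪ μ0)
    (b p q Cb : ℝ) (hb : 0 < b) (hp : p = Real.exp b) (hq : q = p / (p - 1))
    (hCb : Cb = p ^ (1 - q) / q)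
    (φ0 φ1 : X → ℝ) (hφ0_meas : Measurable φ0) (hφ1_meas : Measurable φ1)
    (ε M : ℝ) (hε : 0 < ε) (hφ0_lb : ∀ z, ε ≤ φ0 z) (hφ0_ub : ∀ z, φ0 z ≤ M)
    (hφ1_int : Integrable φ1 μ1)
    (h1 : ∀ z, φ1 z ≤ (φ0 z) ^ (1 / p)) :
    ENNReal.ofReal ((∫ z, φ1 z ∂μ1) - ∫ z, φ0 z ∂μ0) ≤
      ENNReal.ofReal Cb * ∫⁻ z, (μ1.rnDeriv μ0 z) ^ q ∂μ0 :=
  stmt_8_general μ0 μ1 hac b p q Cb hb hp hq hCb φ0 φ1 hφ0_meas ε M hε hφ0_lb hφ0_ub hφ1_int h1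
end

section
/- Let $b > 0$, $p = e^b$, $q = p/(p-1)$, $C_b = p^{1-q}/q$. Let $\mu_0, \mu_1$ be probability measures with $\mu_1 \ll \mu_0$, density $\varrho = d\mu_1/d\mu_0 \in L^q(\mu_0)$. Suppose $T \ge 0$ satisfies: for every bounded measurable $f$, $C_b \left(\int e^{e^{-b} f}\, d\mu_1\right)^q \le T \left(\int e^f \, d\mu_0\right)^{q-1}$. Then $C_b \int \varrho^q\, d\mu_0 \le T$. -/
/-!
Test the hypothesis on `f = log g`, where `g` is `ϱ ^ q` clamped to `[e⁻ⁿ, eⁿ]`, so that `f` is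
bounded, `e ^ f = g → ϱ ^ q` and `e ^ (e⁻ᵇ f) = g ^ (1 / p) → ϱ ^ (q / p) = ϱ ^ (q - 1)`.
Both sides converge by dominated convergence, and since `ϱ` is the density of `μ1`,
`∫ ϱ ^ (q - 1) dμ1 = ∫ ϱ ^ q dμ0 =: B`. The limit inequality `Cb B ^ q ≤ T B ^ (q - 1)` then
rearranges to `Cb B ≤ T`.
-/

open MeasureTheory Filter Topology Real

/-- `x` clamped to `[e⁻ⁿ, eⁿ]`; the lower clamp keeps `log` bounded where `x` vanishes. -/
noncomputable def truncExp (n : ℕ) (x : ℝ) : ℝ := max (exp (-n)) (min (exp n) x)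

section truncExp

variable (n : ℕ) {x s : ℝ}

theorem truncExp_pos (x : ℝ) : 0 < truncExp n x := lt_max_of_lt_left (exp_pos _)

theorem continuous_truncExp : Continuous (truncExp n) :=
  continuous_const.max (continuous_const.min continuous_id)

theorem abs_log_truncExp_le (x : ℝ) : |log (truncExp n x)| ≤ n := by
  refine abs_le.2 ⟨?_, ?_⟩
  · calc -(n : ℝ) = log (exp (-n)) := (log_exp _).symm
      _ ≤ log (truncExp n x) := log_le_log (exp_pos _) (le_max_left _ _)
  · calc log (truncExp n x) ≤ log (exp n) :=
        log_le_log (truncExp_pos n x) (max_le (exp_le_exp.2 (by simp)) (min_le_left _ _))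
      _ = n := log_exp _

theorem truncExp_rpow_le_one_add (hx : 0 ≤ x) (hs : 0 ≤ s) : truncExp n x ^ s ≤ 1 + x ^ s := by
  have h0 := (truncExp_pos n x).le
  rcases le_total x 1 with hx1 | hx1
  · have hle : truncExp n x ≤ 1 :=
      max_le (exp_le_one_iff.2 (by simp)) ((min_le_right _ _).trans hx1)
    linarith [rpow_le_one h0 hle hs, rpow_nonneg hx s]
  · have hle : truncExp n x ≤ x :=
      max_le ((exp_le_one_iff.2 (by simp)).trans hx1) (min_le_right _ _)
    linarith [rpow_le_rpow h0 hle hs]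

theorem tendsto_truncExp (hx : 0 ≤ x) : Tendsto (truncExp · x) atTop (𝓝 x) := by
  have hmin : ∀ᶠ n : ℕ in atTop, min (exp n) x = x :=
    ((tendsto_exp_atTop.comp tendsto_natCast_atTop_atTop).eventually_ge_atTop x).mono
      fun _ => min_eq_right
  have hlow : Tendsto (fun n : ℕ => exp (-n)) atTop (𝓝 0) :=
    tendsto_exp_atBot.comp (tendsto_neg_atBot_iff.2 tendsto_natCast_atTop_atTop)
  have hmax : Tendsto (fun n : ℕ => max (exp (-n)) x) atTop (𝓝 x) := by
    simpa [max_eq_right hx] using hlow.max (tendsto_const_nhds (x := x))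
  exact hmax.congr' (hmin.mono fun n hn => by simp only [truncExp, hn])

theorem tendsto_integral_truncExp_rpow {X : Type*} [MeasurableSpace X] {μ : Measure X}
    [IsFiniteMeasure μ] {F : X → ℝ} (hF : AEStronglyMeasurable F μ) (hF0 : ∀ z, 0 ≤ F z)
    (hs : 0 ≤ s) (hFs : Integrable (fun z => F z ^ s) μ) :
    Tendsto (fun n : ℕ => ∫ z, truncExp n (F z) ^ s ∂μ) atTop (𝓝 (∫ z, F z ^ s ∂μ)) := by
  refine tendsto_integral_of_dominated_convergence (fun z => 1 + F z ^ s)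
    (fun n => ((continuous_rpow_const hs).comp (continuous_truncExp n)).comp_aestronglyMeasurable hF)
    ((integrable_const 1).add hFs) (fun n => .of_forall fun z => ?_) (.of_forall fun z => ?_)
  · rw [norm_of_nonneg (rpow_nonneg (truncExp_pos n _).le s)]
    exact truncExp_rpow_le_one_add n (hF0 z) hs
  · exact (tendsto_truncExp (hF0 z)).rpow_const (Or.inr hs)

end truncExp

theorem Real.mul_rpow_sub_one {x r : ℝ} (hx : 0 ≤ x) (hr : r ≠ 0) : x * x ^ (r - 1) = x ^ r := by
  simpa using (rpow_one_add' (y := r - 1) hx (by simpa using hr)).symm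

theorem mul_le_of_mul_rpow_le_mul_rpow_sub_one {C B T q : ℝ} (hB : 0 ≤ B) (hT : 0 ≤ T)
    (h : C * B ^ q ≤ T * B ^ (q - 1)) : C * B ≤ T := by
  rcases hB.eq_or_lt with rfl | hB
  · simpa using hT
  have hBq : B ^ q = B * B ^ (q - 1) := by rw [rpow_sub_one hB.ne', mul_div_cancel₀ _ hB.ne']
  rw [hBq, ← mul_assoc] at h
  exact le_of_mul_le_mul_right h (rpow_pos_of_pos hB _)

section rnDeriv

variable {α : Type*} {m : MeasurableSpace α} {μ ν : Measure α} [μ.HaveLebesgueDecomposition ν]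
  [SigmaFinite μ] {r : ℝ}

theorem integrable_rnDeriv_rpow_sub_one (hμν : μ ≪ ν) (hr : r ≠ 0)
    (h : Integrable (fun x => (μ.rnDeriv ν x).toReal ^ r) ν) :
    Integrable (fun x => (μ.rnDeriv ν x).toReal ^ (r - 1)) μ := by
  rw [← integrable_rnDeriv_smul_iff hμν]
  simpa only [smul_eq_mul, mul_rpow_sub_one ENNReal.toReal_nonneg hr] using h

theorem integral_rnDeriv_rpow_sub_one (hμν : μ ≪ ν) (hr : r ≠ 0) :
    ∫ x, (μ.rnDeriv ν x).toReal ^ (r - 1) ∂μ = ∫ x, (μ.rnDeriv ν x).toReal ^ r ∂ν := by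
  rw [← integral_rnDeriv_smul hμν]
  simp only [smul_eq_mul, mul_rpow_sub_one ENNReal.toReal_nonneg hr]

end rnDeriv

theorem stmt_9_general {X : Type*} [MeasurableSpace X]
    (μ0 μ1 : Measure X) [IsProbabilityMeasure μ0] [IsProbabilityMeasure μ1]
    (hac : μ1 ≪ μ0)
    (b p q Cb : ℝ) (hb : 0 < b) (hp : p = Real.exp b) (hq : q = p / (p - 1))
    (ϱ : X → ℝ) (hϱ : ϱ = fun z => (μ1.rnDeriv μ0 z).toReal)
    (hϱLq : Integrable (fun z => ϱ z ^ q) μ0)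
    (T : ℝ) (hT : 0 ≤ T)
    (h : ∀ f : X → ℝ, Measurable f → (∃ M, ∀ z, |f z| ≤ M) →
      Cb * (∫ z, Real.exp (Real.exp (-b) * f z) ∂μ1) ^ q ≤
        T * (∫ z, Real.exp (f z) ∂μ0) ^ (q - 1)) :
    Cb * ∫ z, ϱ z ^ q ∂μ0 ≤ T := by
  have hpq : q.HolderConjugate p :=
    hq ▸ (HolderConjugate.conjExponent (hp ▸ one_lt_exp_iff.2 hb)).symm
  have hs : q * exp (-b) = q - 1 := by
    rw [exp_neg, ← hp, ← div_eq_mul_inv, hpq.div_conj_eq_sub_one]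
  have hϱ0 : ∀ z, 0 ≤ ϱ z := by simp [hϱ]
  have hF : Measurable fun z => ϱ z ^ q :=
    hϱ ▸ (Measure.measurable_rnDeriv μ1 μ0).ennreal_toReal.pow_const q
  have hF0 : ∀ z, 0 ≤ ϱ z ^ q := fun z => rpow_nonneg (hϱ0 z) q
  have hdensity : ∫ z, ϱ z ^ (q - 1) ∂μ1 = ∫ z, ϱ z ^ q ∂μ0 :=
    hϱ ▸ integral_rnDeriv_rpow_sub_one hac hpq.ne_zero
  have hint : Integrable (fun z => ϱ z ^ (q - 1)) μ1 := by
    subst hϱ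
    exact integrable_rnDeriv_rpow_sub_one hac hpq.ne_zero hϱLq
  have hstep : ∀ n : ℕ, Cb * (∫ z, truncExp n (ϱ z ^ q) ^ exp (-b) ∂μ1) ^ q ≤
      T * (∫ z, truncExp n (ϱ z ^ q) ∂μ0) ^ (q - 1) := by
    intro n
    simpa only [rpow_def_of_pos (truncExp_pos n _), exp_log (truncExp_pos n _), mul_comm (log _)]
      using h (fun z => log (truncExp n (ϱ z ^ q)))
        ((continuous_truncExp n).measurable.comp hF).log ⟨n, fun z => abs_log_truncExp_le n _⟩
  have hlim0 := tendsto_integral_truncExp_rpow hF.aestronglyMeasurable hF0 zero_le_one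
    (by simpa only [rpow_one] using hϱLq)
  have hlim1 := tendsto_integral_truncExp_rpow (μ := μ1) hF.aestronglyMeasurable hF0
    (exp_pos (-b)).le (by simpa only [← rpow_mul (hϱ0 _), hs] using hint)
  simp only [rpow_one] at hlim0
  simp only [← rpow_mul (hϱ0 _), hs, hdensity] at hlim1
  exact mul_le_of_mul_rpow_le_mul_rpow_sub_one (integral_nonneg hF0) hT <|
    le_of_tendsto_of_tendsto' ((hlim1.rpow_const (Or.inr hpq.nonneg)).const_mul Cb)
      ((hlim0.rpow_const (Or.inr (sub_nonneg.2 hpq.lt.le))).const_mul T) hstep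

/-- Lower-bound half of Proposition 5.10: if `μ1 ≪ μ0` with density
`ϱ = dμ1/dμ0 ∈ L^q(μ0)`, and `T ≥ 0` satisfies
`C_b (∫ e^{e^{-b} f} dμ1)^q ≤ T (∫ e^f dμ0)^{q-1}` for all bounded measurable `f`,
then `C_b ∫ ϱ^q dμ0 ≤ T`. -/
theorem stmt_9 {X : Type*} [MeasurableSpace X]
    (μ0 μ1 : Measure X) [IsProbabilityMeasure μ0] [IsProbabilityMeasure μ1]
    (hac : μ1 ≪ μ0)
    (b p q Cb : ℝ) (hb : 0 < b) (hp : p = Real.exp b) (hq : q = p / (p - 1))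
    (hCb : Cb = p ^ (1 - q) / q)
    (ϱ : X → ℝ) (hϱ : ϱ = fun z => (μ1.rnDeriv μ0 z).toReal)
    (hϱLq : Integrable (fun z => ϱ z ^ q) μ0)
    (T : ℝ) (hT : 0 ≤ T)
    (h : ∀ f : X → ℝ, Measurable f → (∃ M, ∀ z, |f z| ≤ M) →
      Cb * (∫ z, Real.exp (Real.exp (-b) * f z) ∂μ1) ^ q ≤
        T * (∫ z, Real.exp (f z) ∂μ0) ^ (q - 1)) :
    Cb * ∫ z, ϱ z ^ q ∂μ0 ≤ T :=
  stmt_9_general μ0 μ1 hac b p q Cb hb hp hq ϱ hϱ hϱLq T hT h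
end

section
/- Let $b > 0$, $q = e^b/(e^b - 1)$, $C_b = e^{b(1-q)}/q$. Let $\mu_0, \mu_1$ be probability measures on a Polish space such that there exists $T < \infty$ with $C_b (\int e^{e^{-b} f}\, d\mu_1)^q \le T (\int e^f\, d\mu_0)^{q-1}$ for all bounded measurable $f \le 0$. Then $\mu_1$ is absolutely continuous with respect to $\mu_0$; more precisely, for any Borel set $A$ with $\mu_0(A) = 0$, we have $\mu_1(A) = 0$. -/
open MeasureTheory Filter Topology

/-!
Test the hypothesis with `f = -t` off `A` and `f = 0` on `A`. Since `μ₀ A = 0`, the right-hand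
side is `T e^{-t(q-1)}`, which tends to `0` as `t → ∞` because `q > 1`, while the left-hand side
stays at least `C_b μ₁(A)^q` with `C_b > 0`.
-/

section

variable {X : Type*} [MeasurableSpace X]

lemma integrable_exp_of_nonpos (μ : Measure X) [IsFiniteMeasure μ] {f : X → ℝ}
    (hf : Measurable f) (hf0 : ∀ z, f z ≤ 0) : Integrable (fun z => Real.exp (f z)) μ :=
  Integrable.mono' (integrable_const 1) hf.exp.aestronglyMeasurable <| ae_of_all _ fun z => by
    rw [Real.norm_eq_abs, abs_of_pos (Real.exp_pos _)]
    exact Real.exp_le_one_iff.mpr (hf0 z)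

lemma measureReal_le_integral_exp_of_eqOn_zero (μ : Measure X) [IsFiniteMeasure μ]
    {A : Set X} (hA : MeasurableSet A) {f : X → ℝ} (hf : Measurable f) (hf0 : ∀ z, f z ≤ 0)
    (hfA : ∀ z ∈ A, f z = 0) : μ.real A ≤ ∫ z, Real.exp (f z) ∂μ :=
  calc μ.real A = ∫ z in A, (1 : ℝ) ∂μ := by simp
    _ = ∫ z in A, Real.exp (f z) ∂μ := setIntegral_congr_fun hA fun z hz => by simp [hfA z hz]
    _ ≤ ∫ z, Real.exp (f z) ∂μ :=
        setIntegral_le_integral (integrable_exp_of_nonpos μ hf hf0)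
          (ae_of_all _ fun z => (Real.exp_pos _).le)

lemma integral_exp_indicator_compl_of_measure_eq_zero (μ : Measure X) [IsProbabilityMeasure μ]
    {A : Set X} (hA : μ A = 0) (t : ℝ) :
    ∫ z, Real.exp (Aᶜ.indicator (fun _ => -t) z) ∂μ = Real.exp (-t) := by
  have hae : ∀ᵐ z ∂μ, Real.exp (Aᶜ.indicator (fun _ => -t) z) = Real.exp (-t) := by
    filter_upwards [measure_eq_zero_iff_ae_notMem.mp hA] with z hz
    rw [Set.indicator_of_mem (Set.mem_compl hz)]
  rw [integral_congr_ae hae, integral_const, probReal_univ, one_smul]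

end

lemma nonpos_of_forall_le_mul_exp_neg_rpow {a T k : ℝ} (hk : 0 < k)
    (h : ∀ t : ℝ, 0 ≤ t → a ≤ T * Real.exp (-t) ^ k) : a ≤ 0 := by
  have hlim : Tendsto (fun t : ℝ => T * Real.exp (-t) ^ k) atTop (𝓝 0) := by
    have := (Real.tendsto_exp_neg_atTop_nhds_zero.rpow_const (Or.inr hk.le)).const_mul T
    rwa [Real.zero_rpow hk.ne', mul_zero] at this
  exact ge_of_tendsto hlim (eventually_ge_atTop 0 |>.mono h)

lemma measure_eq_zero_of_forall_integral_exp_le {X : Type*} [MeasurableSpace X]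
    {μ0 μ1 : Measure X} [IsProbabilityMeasure μ0] [IsFiniteMeasure μ1] {c q C T : ℝ}
    (hc : 0 ≤ c) (hq : 1 < q) (hC : 0 < C)
    (h : ∀ f : X → ℝ, Measurable f → (∃ M, ∀ z, |f z| ≤ M) → (∀ z, f z ≤ 0) →
      C * (∫ z, Real.exp (c * f z) ∂μ1) ^ q ≤ T * (∫ z, Real.exp (f z) ∂μ0) ^ (q - 1))
    {A : Set X} (hA : MeasurableSet A) (h0 : μ0 A = 0) : μ1 A = 0 := by
  have bound : ∀ t : ℝ, 0 ≤ t → C * μ1.real A ^ q ≤ T * Real.exp (-t) ^ (q - 1) := by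
    intro t ht
    set f := Aᶜ.indicator fun _ => -t
    have hf : Measurable f := measurable_const.indicator hA.compl
    have hf0 : ∀ z, f z ≤ 0 := Set.indicator_nonpos fun _ _ => by linarith
    have hfA : ∀ z ∈ A, c * f z = 0 := fun z hz => by
      simp [f, Set.indicator_of_notMem (Set.notMem_compl_iff.mpr hz)]
    have hf_bdd : ∃ M, ∀ z, |f z| ≤ M := ⟨t, fun z => by
      by_cases hz : z ∈ Aᶜ <;> simp [f, hz, abs_of_nonneg ht, ht]⟩
    calc C * μ1.real A ^ q ≤ C * (∫ z, Real.exp (c * f z) ∂μ1) ^ q := by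
          gcongr
          exact measureReal_le_integral_exp_of_eqOn_zero μ1 hA (hf.const_mul _)
            (fun z => mul_nonpos_of_nonneg_of_nonpos hc (hf0 z)) hfA
      _ ≤ T * (∫ z, Real.exp (f z) ∂μ0) ^ (q - 1) := h f hf hf_bdd hf0
      _ = T * Real.exp (-t) ^ (q - 1) := by
          rw [integral_exp_indicator_compl_of_measure_eq_zero μ0 h0]
  have hpow : μ1.real A ^ q = 0 := le_antisymm
    (nonpos_of_mul_nonpos_right
      (nonpos_of_forall_le_mul_exp_neg_rpow (sub_pos.mpr hq) bound) hC)
    (Real.rpow_nonneg measureReal_nonneg q)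
  exact (measureReal_eq_zero_iff).mp <|
    (Real.rpow_eq_zero measureReal_nonneg (by linarith)).mp hpow

theorem stmt_10_general {X : Type*} [MeasurableSpace X]
    (μ0 μ1 : Measure X) [IsProbabilityMeasure μ0] [IsProbabilityMeasure μ1]
    (b q Cb : ℝ) (hb : 0 < b)
    (hq : q = Real.exp b / (Real.exp b - 1))
    (hCb : Cb = Real.exp (b * (1 - q)) / q)
    (T : ℝ)
    (h : ∀ f : X → ℝ, Measurable f → (∃ M, ∀ z, |f z| ≤ M) → (∀ z, f z ≤ 0) →
      Cb * (∫ z, Real.exp (Real.exp (-b) * f z) ∂μ1) ^ q ≤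
        T * (∫ z, Real.exp (f z) ∂μ0) ^ (q - 1)) :
    μ1 ≪ μ0 ∧ ∀ A : Set X, MeasurableSet A → μ0 A = 0 → μ1 A = 0 := by
  have hq1 : 1 < q := by
    rw [hq, one_lt_div (by linarith [Real.add_one_lt_exp hb.ne'])]
    linarith
  have hCb0 : 0 < Cb := hCb ▸ div_pos (Real.exp_pos _) (by linarith)
  have key : ∀ A : Set X, MeasurableSet A → μ0 A = 0 → μ1 A = 0 := fun _ hA h0 =>
    measure_eq_zero_of_forall_integral_exp_le (Real.exp_pos _).le hq1 hCb0 h hA h0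
  exact ⟨Measure.AbsolutelyContinuous.mk key, key⟩

/-- Lemma 5.8: if on a Polish space there is a finite `T` with
`C_b (∫ e^{e^{-b} f} dμ1)^q ≤ T (∫ e^f dμ0)^{q-1}` for all bounded measurable
`f ≤ 0`, then `μ1 ≪ μ0`: any Borel `A` with `μ0 A = 0` has `μ1 A = 0`. -/
theorem stmt_10 {X : Type*} [MeasurableSpace X] [TopologicalSpace X]
    [PolishSpace X] [BorelSpace X]
    (μ0 μ1 : Measure X) [IsProbabilityMeasure μ0] [IsProbabilityMeasure μ1]
    (b q Cb : ℝ) (hb : 0 < b)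
    (hq : q = Real.exp b / (Real.exp b - 1))
    (hCb : Cb = Real.exp (b * (1 - q)) / q)
    (T : ℝ) (hT : 0 ≤ T)
    (h : ∀ f : X → ℝ, Measurable f → (∃ M, ∀ z, |f z| ≤ M) → (∀ z, f z ≤ 0) →
      Cb * (∫ z, Real.exp (Real.exp (-b) * f z) ∂μ1) ^ q ≤
        T * (∫ z, Real.exp (f z) ∂μ0) ^ (q - 1)) :
    μ1 ≪ μ0 ∧ ∀ A : Set X, MeasurableSet A → μ0 A = 0 → μ1 A = 0 :=
  stmt_10_general μ0 μ1 b q Cb hb hq hCb T h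
end

section
/- Let $P$ be a Markov kernel on a metric space $X$ with local slope $|\nabla \cdot|$ satisfying the chain rule. If $|\nabla Pf| \le C^{1/2} P|\nabla f|$ for all bounded Lipschitz $f$ (with $C > 0$), then for all positive bounded Lipschitz $f$ bounded away from zero, $Pf \cdot |\nabla \ln Pf|^2 \le C\, P(f |\nabla \ln f|^2)$. -/
open MeasureTheory ProbabilityTheory Filter

/-- The local Lipschitz slope `|∇f|(x) = limsup_{y → x} |f(x) - f(y)|/d(x,y)`. -/
noncomputable def lipSlope {X : Type*} [MetricSpace X] (f : X → ℝ) (x : X) : ℝ :=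
  Filter.limsup (fun y => |f x - f y| / dist x y) (nhdsWithin x {x}ᶜ)

/-- Bounded Lipschitz functions. -/
def BddLipschitz {X : Type*} [MetricSpace X] (f : X → ℝ) : Prop :=
  (∃ K, LipschitzWith K f) ∧ ∃ M, ∀ x, |f x| ≤ M

/-! With `c = Pf(x)`, apply the hypothesis to the bounded Lipschitz function `f - c`. Its left
side dominates `Pf(x) |∇ ln Pf|(x)` by the chain rule for `exp ∘ ln`; on the right the chain rule
gives `|∇f| = f |∇ ln f|`. Squaring and the Cauchy–Schwarz (bivariate Jensen) inequality
`(P|∇f|)² ≤ Pf · P(|∇f|²/f)` then give the claim. The shift by `c` matters because `∫ f ∂(P z)`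
is the junk value `0` where `f` is not `P z`-integrable, whereas `∫ (f - c) ∂(P z) = 0` there
agrees with its value at `x`. -/

open Topology

lemma Filter.limsup_mul_of_tendsto {ι : Type*} {F : Filter ι} [F.NeBot] {q r : ι → ℝ} {c : ℝ}
    (hq₀ : 0 ≤ᶠ[F] q) (hq : F.IsBoundedUnder (· ≤ ·) q) (hr₀ : 0 ≤ᶠ[F] r)
    (hr : Tendsto r F (𝓝 c)) :
    limsup (q * r) F = limsup q F * c := by
  apply le_antisymm
  · simpa [hr.limsup_eq] using limsup_mul_le hq₀.frequently hq hr₀ hr.isBoundedUnder_le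
  · simpa [hr.liminf_eq] using le_limsup_mul hq₀.frequently hq hr₀ hr.isBoundedUnder_le

section Slope

variable {X : Type*} [MetricSpace X]

lemma lipSlope_of_nhdsNE_eq_bot {x : X} (hx : 𝓝[≠] x = ⊥) (f : X → ℝ) : lipSlope f x = 0 := by
  simp [lipSlope, hx, limsup_eq]

lemma tendsto_dist_nhdsNE (x : X) : Tendsto (dist x) (𝓝[≠] x) (𝓝 0) :=
  ((continuous_const.dist continuous_id).tendsto' x 0 (dist_self x)).mono_left nhdsWithin_le_nhds

lemma lipSlope_nonneg (f : X → ℝ) (x : X) : 0 ≤ lipSlope f x := by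
  rcases (𝓝[≠] x).eq_or_neBot with hx | hx
  · rw [lipSlope_of_nhdsNE_eq_bot hx]
  by_cases hf : (𝓝[≠] x).IsBoundedUnder (· ≤ ·) fun y => |f x - f y| / dist x y
  · exact le_limsup_of_frequently_le (Frequently.of_forall fun y => by positivity) hf
  · rw [lipSlope, Real.limsup_of_not_isBoundedUnder hf]

lemma lipSlope_congr {f g : X → ℝ} {x : X} (h : f =ᶠ[𝓝[≠] x] g) (hx : f x = g x) :
    lipSlope f x = lipSlope g x :=
  limsup_congr (h.mono fun y hy => by rw [hx, hy])

lemma lipSlope_add_const (f : X → ℝ) (c : ℝ) (x : X) :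
    lipSlope (fun y => f y + c) x = lipSlope f x := by
  simp [lipSlope]

lemma lipSlope_sub_const (f : X → ℝ) (c : ℝ) (x : X) :
    lipSlope (fun y => f y - c) x = lipSlope f x := by
  simp [lipSlope]

lemma LipschitzWith.isBoundedUnder_slope {f : X → ℝ} {K : NNReal} (hf : LipschitzWith K f)
    (x : X) : (𝓝[≠] x).IsBoundedUnder (· ≤ ·) fun y => |f x - f y| / dist x y :=
  isBoundedUnder_of ⟨K, fun y => div_le_of_le_mul₀ dist_nonneg K.coe_nonneg
    (by simpa [Real.dist_eq] using hf.dist_le_mul x y)⟩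

lemma LipschitzWith.lipSlope_le {f : X → ℝ} {K : NNReal} (hf : LipschitzWith K f) (x : X) :
    lipSlope f x ≤ K := by
  rcases (𝓝[≠] x).eq_or_neBot with hx | hx
  · rw [lipSlope_of_nhdsNE_eq_bot hx]
    exact K.coe_nonneg
  refine limsup_le_of_le (isCoboundedUnder_le_of_eventually_le _
    (Eventually.of_forall fun y => by positivity)) (Eventually.of_forall fun y => ?_)
  exact div_le_of_le_mul₀ dist_nonneg K.coe_nonneg
    (by simpa [Real.dist_eq] using hf.dist_le_mul x y)

lemma lipSlope_eq_zero_of_frequently_eq {f : X → ℝ} {x : X} {b : ℝ}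
    (hb : ∃ᶠ y in 𝓝[≠] x, f y = b) (hbx : b ≠ f x) : lipSlope f x = 0 := by
  -- the difference quotient is unbounded, and an unbounded `limsup` in `ℝ` is the junk value `0`
  refine Real.limsup_of_not_isBoundedUnder fun ⟨A, hA⟩ => ?_
  have hgap : 0 < |f x - b| := abs_pos.2 (sub_ne_zero.2 hbx.symm)
  have hclose : ∀ᶠ y in 𝓝[≠] x, dist x y < |f x - b| / (|A| + 1) :=
    (tendsto_dist_nhdsNE x).eventually (gt_mem_nhds (by positivity))
  obtain ⟨y, hyb, hyA, hy, hyx⟩ := (hb.and_eventually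
    ((eventually_map.1 hA).and (hclose.and self_mem_nhdsWithin))).exists
  have hpos : 0 < dist x y := dist_pos.2 (Ne.symm hyx)
  rw [hyb, div_le_iff₀ hpos] at hyA
  rw [lt_div_iff₀ (by positivity)] at hy
  nlinarith [le_abs_self A]

lemma tendsto_nhdsNE_of_isBoundedUnder_slope {f : X → ℝ} {x : X}
    (hf : (𝓝[≠] x).IsBoundedUnder (· ≤ ·) fun y => |f x - f y| / dist x y) :
    Tendsto f (𝓝[≠] x) (𝓝 (f x)) := by
  obtain ⟨A, hA⟩ := hf
  rw [tendsto_iff_dist_tendsto_zero]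
  refine squeeze_zero' (Eventually.of_forall fun y => dist_nonneg) ?_
    (by simpa using (tendsto_dist_nhdsNE x).const_mul A)
  filter_upwards [eventually_map.1 hA, self_mem_nhdsWithin] with y hyA hy
  rw [dist_comm, Real.dist_eq]
  exact (div_le_iff₀ (dist_pos.2 (Ne.symm hy))).1 hyA

theorem lipSlope_comp_of_hasDerivAt {f : X → ℝ} {ψ : ℝ → ℝ} {ψ' : ℝ} {x : X}
    (hψ : HasDerivAt ψ ψ' (f x))
    (hf : (𝓝[≠] x).IsBoundedUnder (· ≤ ·) fun y => |f x - f y| / dist x y) :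
    lipSlope (fun y => ψ (f y)) x = lipSlope f x * |ψ'| := by
  rcases (𝓝[≠] x).eq_or_neBot with hx | hx
  · simp [lipSlope_of_nhdsNE_eq_bot hx]
  have hρ : Tendsto (fun y => |dslope ψ (f x) (f y)|) (𝓝[≠] x) (𝓝 |ψ'|) := by
    have := (continuousAt_dslope_same.2 hψ.differentiableAt).tendsto.comp
      (tendsto_nhdsNE_of_isBoundedUnder_slope hf)
    rw [dslope_same, hψ.deriv] at this
    exact this.abs
  have hquot : (fun y => |ψ (f x) - ψ (f y)| / dist x y) =
      (fun y => |f x - f y| / dist x y) * fun y => |dslope ψ (f x) (f y)| := by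
    funext y
    rw [Pi.mul_apply, abs_sub_comm, ← sub_smul_dslope, smul_eq_mul, abs_mul, abs_sub_comm]
    ring
  unfold lipSlope
  rw [hquot]
  exact limsup_mul_of_tendsto (Eventually.of_forall fun y => by positivity) hf
    (Eventually.of_forall fun y => abs_nonneg _) hρ

end Slope

section Log

variable {X : Type*} [MetricSpace X]

lemma LipschitzWith.mul_lipSlope_log {f : X → ℝ} {K : NNReal} (hf : LipschitzWith K f) {x : X}
    (hfx : 0 < f x) : f x * lipSlope (fun y => Real.log (f y)) x = lipSlope f x := by
  rw [lipSlope_comp_of_hasDerivAt (Real.hasDerivAt_log hfx.ne') (hf.isBoundedUnder_slope x),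
    abs_inv, abs_of_pos hfx]
  field_simp

lemma mul_lipSlope_log_le {g : X → ℝ} (hg : ∀ y, 0 < g y) (x : X) :
    g x * lipSlope (fun y => Real.log (g y)) x ≤ lipSlope g x := by
  by_cases hb : (𝓝[≠] x).IsBoundedUnder (· ≤ ·)
      fun y => |Real.log (g x) - Real.log (g y)| / dist x y
  · have h := lipSlope_comp_of_hasDerivAt (f := fun y => Real.log (g y))
      (Real.hasDerivAt_exp (Real.log (g x))) hb
    simp only [Real.exp_log (hg _), abs_of_pos (hg x)] at h
    rw [h, mul_comm]
  · rw [lipSlope, Real.limsup_of_not_isBoundedUnder hb, mul_zero]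
    exact lipSlope_nonneg g x

end Log

lemma sq_integral_le_integral_mul_integral_sq_div {α : Type*} [MeasurableSpace α]
    {μ : Measure α} {f u : α → ℝ} (hf : Integrable f μ) (hf₀ : ∀ a, 0 < f a)
    (hu : Integrable u μ) (huf : Integrable (fun a => u a ^ 2 / f a) μ) :
    (∫ a, u a ∂μ) ^ 2 ≤ (∫ a, f a ∂μ) * ∫ a, u a ^ 2 / f a ∂μ := by
  have hquad : ∀ t : ℝ, 0 ≤ (∫ a, f a ∂μ) * (t * t) + (-2 * ∫ a, u a ∂μ) * t +
      ∫ a, u a ^ 2 / f a ∂μ := by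
    intro t
    have hexpand : ∀ a, (u a - t * f a) ^ 2 / f a = u a ^ 2 / f a - 2 * t * u a + t ^ 2 * f a := by
      intro a
      field_simp [(hf₀ a).ne']
      ring
    have h : 0 ≤ ∫ a, (u a - t * f a) ^ 2 / f a ∂μ :=
      integral_nonneg fun a => div_nonneg (sq_nonneg _) (hf₀ a).le
    simp only [hexpand] at h
    have hdiff : Integrable (fun a => u a ^ 2 / f a - 2 * t * u a) μ := huf.sub (hu.const_mul _)
    rw [integral_add hdiff (hf.const_mul _), integral_sub huf (hu.const_mul _),
      integral_const_mul, integral_const_mul] at h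
    linarith
  have := discrim_le_zero hquad
  rw [discrim] at this
  linarith

lemma const_le_integral_of_le {α : Type*} [MeasurableSpace α] {μ : Measure α}
    [IsProbabilityMeasure μ] {f : α → ℝ} {ε : ℝ} (hf : ∀ a, ε ≤ f a) (hfμ : Integrable f μ) :
    ε ≤ ∫ a, f a ∂μ := by
  simpa using integral_mono (integrable_const ε) hfμ hf

lemma sq_integral_lipSlope_le {X : Type*} [MeasurableSpace X] [MetricSpace X] {μ : Measure X}
    [IsFiniteMeasure μ] {f : X → ℝ} {K : NNReal} (hK : LipschitzWith K f) {ε : ℝ} (hε : 0 < ε)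
    (hf : ∀ z, ε ≤ f z) (hfμ : Integrable f μ) :
    (∫ w, lipSlope f w ∂μ) ^ 2 ≤
      (∫ w, f w ∂μ) * ∫ w, f w * lipSlope (fun u => Real.log (f u)) w ^ 2 ∂μ := by
  have hf₀ : ∀ w, 0 < f w := fun w => hε.trans_le (hf w)
  have hchain : ∀ w, f w * lipSlope (fun u => Real.log (f u)) w ^ 2 = lipSlope f w ^ 2 / f w := by
    intro w
    rw [← hK.mul_lipSlope_log (hf₀ w)]
    field_simp [(hf₀ w).ne']
  simp only [hchain]
  by_cases hu : Integrable (lipSlope f) μ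
  · refine sq_integral_le_integral_mul_integral_sq_div hfμ hf₀ hu ?_
    refine Integrable.of_bound ((hu.1.pow 2).div₀ hfμ.1) (K ^ 2 / ε) (ae_of_all _ fun w => ?_)
    rw [Real.norm_of_nonneg (div_nonneg (sq_nonneg _) (hf₀ w).le)]
    exact div_le_div₀ (sq_nonneg _) (pow_le_pow_left₀ (lipSlope_nonneg f w) (hK.lipSlope_le w) 2)
      hε (hf w)
  · rw [integral_undef hu, sq, zero_mul]
    exact mul_nonneg (integral_nonneg fun w => (hf₀ w).le)
      (integral_nonneg fun w => div_nonneg (sq_nonneg _) (hf₀ w).le)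

lemma BddLipschitz.sub_const {X : Type*} [MetricSpace X] {f : X → ℝ} (hf : BddLipschitz f)
    (c : ℝ) : BddLipschitz fun x => f x - c := by
  obtain ⟨⟨K, hK⟩, M, hM⟩ := hf
  exact ⟨⟨K + 0, hK.sub (LipschitzWith.const c)⟩, M + |c|,
    fun x => (abs_sub _ _).trans (by linarith [hM x])⟩

lemma ProbabilityTheory.Kernel.mul_lipSlope_log_integral_le {X : Type*} [MeasurableSpace X]
    [MetricSpace X] (P : Kernel X X) [IsMarkovKernel P] {f : X → ℝ} {ε : ℝ} (hε : 0 < ε)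
    (hf : ∀ z, ε ≤ f z) {x : X} (hfx : Integrable f (P x)) :
    (∫ w, f w ∂(P x)) * lipSlope (fun z => Real.log (∫ w, f w ∂(P z))) x ≤
      lipSlope (fun z => ∫ w, (f w - ∫ w, f w ∂(P x)) ∂(P z)) x := by
  set c := ∫ w, f w ∂(P x)
  -- `∫ f ∂(P z)` is `0` where `f` is not `P z`-integrable; `g` replaces that junk value by `c`.
  set g : X → ℝ := fun z => ∫ w, (f w - c) ∂(P z) + c
  have hg_int : ∀ z, Integrable f (P z) → g z = ∫ w, f w ∂(P z) := fun z hz => by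
    simp [g, integral_sub hz (integrable_const c)]
  have hg_nint : ∀ z, ¬Integrable f (P z) → ∫ w, f w ∂(P z) = 0 ∧ g z = c := fun z hz => by
    have hz' : ¬Integrable (fun w => f w - c) (P z) := by
      simpa [sub_eq_add_neg, integrable_add_const_iff] using hz
    simp [g, integral_undef hz, integral_undef hz']
  have hc : 0 < c := hε.trans_le (const_le_integral_of_le hf hfx)
  have hg_pos : ∀ z, 0 < g z := fun z => by
    by_cases hz : Integrable f (P z)
    · exact (hg_int z hz).symm ▸ hε.trans_le (const_le_integral_of_le hf hz)
    · exact (hg_nint z hz).2.symm ▸ hc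
  have hgx : g x = c := hg_int x hfx
  have hle : lipSlope (fun z => Real.log (∫ w, f w ∂(P z))) x ≤
      lipSlope (fun z => Real.log (g z)) x := by
    by_cases hev : ∀ᶠ z in 𝓝[≠] x, Integrable f (P z)
    · exact (lipSlope_congr (hev.mono fun z hz => by simp only [hg_int z hz]) (by rw [hgx])).le
    rcases eq_or_ne c 1 with hc1 | hc1
    · refine (lipSlope_congr (Eventually.of_forall fun z => ?_) (by rw [hgx])).le
      by_cases hz : Integrable f (P z)
      · simp only [hg_int z hz]
      · simp only [(hg_nint z hz).1, (hg_nint z hz).2, hc1, Real.log_zero, Real.log_one]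
    · have hzero : ∃ᶠ z in 𝓝[≠] x, Real.log (∫ w, f w ∂(P z)) = 0 :=
        (not_eventually.1 hev).mono fun z hz => by rw [(hg_nint z hz).1, Real.log_zero]
      rw [lipSlope_eq_zero_of_frequently_eq hzero (Real.log_ne_zero_of_pos_of_ne_one hc hc1).symm]
      exact lipSlope_nonneg _ x
  calc c * lipSlope (fun z => Real.log (∫ w, f w ∂(P z))) x
      ≤ g x * lipSlope (fun z => Real.log (g z)) x := by rw [hgx]; gcongr
    _ ≤ lipSlope g x := mul_lipSlope_log_le hg_pos x
    _ = _ := lipSlope_add_const _ c x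

/-- If `|∇Pf| ≤ C^{1/2} P|∇f|` for all bounded Lipschitz `f`, then
`Pf |∇ ln Pf|² ≤ C P(f |∇ ln f|²)` for all positive bounded Lipschitz `f`
bounded away from zero. -/
theorem stmt_12 {X : Type*} [MeasurableSpace X] [MetricSpace X]
    (P : Kernel X X) [IsMarkovKernel P] (C : ℝ) (hC : 0 < C)
    (h : ∀ f : X → ℝ, BddLipschitz f → ∀ x : X,
      lipSlope (fun z => ∫ w, f w ∂(P z)) x ≤
        Real.sqrt C * ∫ w, lipSlope f w ∂(P x)) :
    ∀ f : X → ℝ, BddLipschitz f → ∀ ε : ℝ, 0 < ε → (∀ z, ε ≤ f z) → ∀ x : X,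
      (∫ w, f w ∂(P x)) *
          (lipSlope (fun z => Real.log (∫ w, f w ∂(P z))) x) ^ 2 ≤
        C * ∫ w, f w * (lipSlope (fun u => Real.log (f u)) w) ^ 2 ∂(P x) := by
  intro f hf ε hε hfε x
  set J := ∫ w, f w * lipSlope (fun u => Real.log (f u)) w ^ 2 ∂(P x)
  by_cases hfx : Integrable f (P x)
  swap
  · simpa [integral_undef hfx] using
      mul_nonneg hC.le (integral_nonneg fun w => mul_nonneg (hε.le.trans (hfε w)) (sq_nonneg _))
  set c := ∫ w, f w ∂(P x)
  set T := lipSlope (fun z => Real.log (∫ w, f w ∂(P z))) x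
  set I := ∫ w, lipSlope f w ∂(P x)
  have hc : 0 < c := hε.trans_le (const_le_integral_of_le hfε hfx)
  have hslope : c * T ≤ Real.sqrt C * I := by
    have hshift := h _ (hf.sub_const c) x
    simp only [lipSlope_sub_const] at hshift
    exact (P.mul_lipSlope_log_integral_le hε hfε hfx).trans hshift
  have hjensen : I ^ 2 ≤ c * J := sq_integral_lipSlope_le hf.1.choose_spec hε hfε hfx
  refine le_of_mul_le_mul_left ?_ hc
  calc c * (c * T ^ 2) = (c * T) ^ 2 := by ring
    _ ≤ (Real.sqrt C * I) ^ 2 := pow_le_pow_left₀ (mul_nonneg hc.le (lipSlope_nonneg _ x)) hslope 2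
    _ = C * I ^ 2 := by rw [mul_pow, Real.sq_sqrt hC.le]
    _ ≤ C * (c * J) := by gcongr
    _ = c * (C * J) := by ring
end

section
/- Let $p_t$ denote the heat semigroup on $\mathbb{R}^n$. For every smooth bounded $\varphi > 0$ bounded away from zero and every $t > 0$, $p_t\varphi \cdot |\nabla \ln p_t \varphi|^2 \le \frac{2}{t}\left(p_t(\varphi \ln \varphi) - (p_t\varphi) \ln p_t \varphi\right)$. -/
open MeasureTheory

/-- The Gaussian heat semigroup on `ℝⁿ`:
`p_t φ(x) = ∫ φ(x + √t y) dγ(y)` with `γ` the standard Gaussian measure,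
written with its explicit density w.r.t. Lebesgue measure. -/
noncomputable def heatSem (n : ℕ) (t : ℝ) (φ : EuclideanSpace ℝ (Fin n) → ℝ)
    (x : EuclideanSpace ℝ (Fin n)) : ℝ :=
  ∫ y : EuclideanSpace ℝ (Fin n), φ (x + Real.sqrt t • y) *
    ((2 * Real.pi) ^ (-(n : ℝ) / 2) * Real.exp (-‖y‖ ^ 2 / 2))

open MeasureTheory Real

noncomputable section AuxRLSI

local notation "⟪" x ", " y "⟫" => @inner ℝ _ _ x y

/-- Standard Gaussian density on ℝⁿ. -/
def gaussDen (n : ℕ) (y : EuclideanSpace ℝ (Fin n)) : ℝ :=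
  (2 * Real.pi) ^ (-(n : ℝ) / 2) * Real.exp (-‖y‖ ^ 2 / 2)

variable {n : ℕ}

lemma gaussDen_pos (y : EuclideanSpace ℝ (Fin n)) : 0 < gaussDen n y := by
  have := Real.pi_pos
  unfold gaussDen
  positivity

lemma continuous_gaussDen : Continuous (gaussDen n) := by
  unfold gaussDen
  fun_prop

lemma gaussDen_sub (c y : EuclideanSpace ℝ (Fin n)) :
    gaussDen n (y - c) = Real.exp (-‖c‖ ^ 2 / 2) * (gaussDen n y * Real.exp ⟪c, y⟫) := by
  unfold gaussDen
  rw [mul_left_comm, ← Real.exp_add, mul_assoc, ← Real.exp_add]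
  congr 2
  have h : ‖y - c‖ ^ 2 = ‖y‖ ^ 2 - 2 * ⟪y, c⟫ + ‖c‖ ^ 2 := norm_sub_sq_real y c
  have h2 : ⟪y, c⟫ = ⟪c, y⟫ := real_inner_comm c y
  rw [h, h2]; ring

lemma integrable_gaussDen_exp (c : EuclideanSpace ℝ (Fin n)) :
    Integrable (fun y : EuclideanSpace ℝ (Fin n) => gaussDen n y * Real.exp ⟪c, y⟫) := by
  have h := (GaussianFourier.integrable_cexp_neg_mul_sq_norm_add_of_euclideanSpace
    (b := (1/2 : ℂ)) (by norm_num) 1 c).norm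
  have h2 : Integrable
      (fun y : EuclideanSpace ℝ (Fin n) => Real.exp (-(1/2) * ‖y‖ ^ 2 + ⟪c, y⟫)) := by
    refine h.congr (Filter.Eventually.of_forall fun y => ?_)
    simp only []
    rw [Complex.norm_exp]
    congr 1
    rw [show (-(1/2 : ℂ) * (‖y‖:ℂ)^2 + 1 * ((⟪c, y⟫ : ℝ) : ℂ)) =
      (((-(1/2) * ‖y‖^2 + ⟪c, y⟫ : ℝ)) : ℂ) by push_cast; ring]
    exact Complex.ofReal_re _
  have := h2.const_mul ((2 * Real.pi) ^ (-(n : ℝ) / 2))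
  refine this.congr' ?_ ?_
  · exact ((continuous_gaussDen.mul (Real.continuous_exp.comp
      (continuous_const.inner continuous_id))).aestronglyMeasurable)
  · refine Filter.Eventually.of_forall fun y => ?_
    unfold gaussDen
    rw [mul_assoc, ← Real.exp_add]
    ring_nf

end AuxRLSI
noncomputable section AuxRLSI2

local notation "⟪" x ", " y "⟫" => @inner ℝ _ _ x y

variable {n : ℕ}

lemma integrable_gaussDen : Integrable (gaussDen n) := by
  simpa using integrable_gaussDen_exp (0 : EuclideanSpace ℝ (Fin n))

lemma integral_gaussDen : ∫ y : EuclideanSpace ℝ (Fin n), gaussDen n y = 1 := by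
  unfold gaussDen
  rw [integral_const_mul]
  have h : ∫ y : EuclideanSpace ℝ (Fin n), Real.exp (-‖y‖ ^ 2 / 2)
      = (2 * π) ^ ((n : ℝ) / 2) := by
    have := GaussianFourier.integral_rexp_neg_mul_sq_norm
      (V := EuclideanSpace ℝ (Fin n)) (b := 1/2) (by norm_num)
    simp only [finrank_euclideanSpace, Fintype.card_fin] at this
    rw [show ((2:ℝ) * π) = π / (1/2) by ring, ← this]
    congr 1 with y
    ring_nf
  rw [h, ← Real.rpow_add (by positivity),
    show (-(n:ℝ)/2 + (n:ℝ)/2) = 0 by ring, Real.rpow_zero]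

lemma integral_gaussDen_exp (c : EuclideanSpace ℝ (Fin n)) :
    ∫ y : EuclideanSpace ℝ (Fin n), gaussDen n y * Real.exp ⟪c, y⟫
      = Real.exp (‖c‖ ^ 2 / 2) := by
  have key : ∀ y : EuclideanSpace ℝ (Fin n),
      gaussDen n y * Real.exp ⟪c, y⟫ = Real.exp (‖c‖ ^ 2 / 2) * gaussDen n (y - c) := by
    intro y
    rw [gaussDen_sub c y, ← mul_assoc, ← Real.exp_add,
      show ‖c‖^2/2 + -‖c‖^2/2 = 0 by ring, Real.exp_zero, one_mul]
  simp_rw [key]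
  rw [integral_const_mul]
  have : ∫ y : EuclideanSpace ℝ (Fin n), gaussDen n (y - c) = 1 := by
    rw [show (fun y : EuclideanSpace ℝ (Fin n) => gaussDen n (y - c))
      = fun y => gaussDen n (y + -c) by funext y; rw [sub_eq_add_neg]]
    rw [integral_add_right_eq_self (μ := volume) (gaussDen n) (-c)]
    exact integral_gaussDen
  rw [this, mul_one]

lemma integrable_inner_gaussDen (c : EuclideanSpace ℝ (Fin n)) :
    Integrable (fun y : EuclideanSpace ℝ (Fin n) => ⟪c, y⟫ * gaussDen n y) := by
  have hg : Integrable (fun y : EuclideanSpace ℝ (Fin n) =>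
      gaussDen n y * Real.exp ⟪c, y⟫ + gaussDen n y * Real.exp ⟪-c, y⟫) :=
    (integrable_gaussDen_exp c).add (integrable_gaussDen_exp (-c))
  refine hg.mono' ?_ (Filter.Eventually.of_forall fun y => ?_)
  · exact ((continuous_const.inner continuous_id).mul continuous_gaussDen).aestronglyMeasurable
  · have h1 : 0 < gaussDen n y := gaussDen_pos y
    have habs : |⟪c, y⟫| ≤ Real.exp ⟪c, y⟫ + Real.exp (-⟪c, y⟫) := by
      rcases abs_cases (⟪c, y⟫ : ℝ) with ⟨h, _⟩ | ⟨h, _⟩ <;> rw [h] <;>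
        nlinarith [Real.add_one_le_exp (⟪c, y⟫ : ℝ), Real.add_one_le_exp (-⟪c, y⟫ : ℝ),
          Real.exp_pos (⟪c, y⟫ : ℝ), Real.exp_pos (-⟪c, y⟫ : ℝ)]
    rw [Real.norm_eq_abs, abs_mul, abs_of_pos h1]
    have h2 : ⟪-c, y⟫ = -⟪c, y⟫ := by
      rw [inner_neg_left]
    rw [h2]
    calc |⟪c, y⟫| * gaussDen n y ≤ (Real.exp ⟪c, y⟫ + Real.exp (-⟪c, y⟫)) * gaussDen n y := by
          exact mul_le_mul_of_nonneg_right habs h1.le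
      _ = gaussDen n y * Real.exp ⟪c, y⟫ + gaussDen n y * Real.exp (-⟪c, y⟫) := by ring

/-- Young-type inequality: `a b ≤ a ln a - a ln P - a + P e^b`. -/
lemma young_ineq {a P : ℝ} (ha : 0 < a) (hP : 0 < P) (b : ℝ) :
    a * b ≤ a * Real.log a - a * Real.log P - a + P * Real.exp b := by
  have key : P * Real.exp b = a * Real.exp (b - Real.log a + Real.log P) := by
    rw [Real.exp_add, Real.exp_sub, Real.exp_log ha, Real.exp_log hP]
    field_simp
  have h2 : 1 + (b - Real.log a + Real.log P) ≤ Real.exp (b - Real.log a + Real.log P) :=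
    by linarith [Real.add_one_le_exp (b - Real.log a + Real.log P)]
  have m := mul_le_mul_of_nonneg_left h2 ha.le
  have e1 : a * (1 + (b - Real.log a + Real.log P))
      = a + a*b - a*Real.log a + a*Real.log P := by ring
  linarith [key, m, e1, mul_comm P (Real.exp b)]

end AuxRLSI2


section Main

local notation "⟪" x ", " y "⟫" => @inner ℝ _ _ x y



open MeasureTheory


set_option maxHeartbeats 2000000 in
/-- Reverse logarithmic Sobolev inequality for the heat semigroup on `ℝⁿ`:
`p_t φ |∇ ln p_t φ|² ≤ (2/t)(p_t(φ ln φ) - (p_t φ) ln p_t φ)`. -/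
theorem stmt_14 (n : ℕ) (t : ℝ) (ht : 0 < t)
    (φ : EuclideanSpace ℝ (Fin n) → ℝ)
    (hφ : ContDiff ℝ (⊤ : ℕ∞) φ)
    (hbd : ∃ M, ∀ x, |φ x| ≤ M)
    (ε : ℝ) (hε : 0 < ε) (hlb : ∀ x, ε ≤ φ x) :
    ∀ x, heatSem n t φ x *
        ‖gradient (fun z => Real.log (heatSem n t φ z)) x‖ ^ 2 ≤
      (2 / t) * (heatSem n t (fun z => φ z * Real.log (φ z)) x -
        heatSem n t φ x * Real.log (heatSem n t φ x)) := by
  obtain ⟨M, hM⟩ := hbd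
  intro x
  set F : EuclideanSpace ℝ (Fin n) → ℝ := fun y => φ (x + Real.sqrt t • y) with hFdef
  have hFc : Continuous F := hφ.continuous.comp (by fun_prop)
  have hFlb : ∀ y, ε ≤ F y := fun y => hlb _
  have hFpos : ∀ y, 0 < F y := fun y => lt_of_lt_of_le hε (hFlb y)
  have hFub : ∀ y, |F y| ≤ M := fun y => hM _
  have hMpos : 0 < M := lt_of_lt_of_le (hFpos x) (le_trans (le_abs_self _) (hFub x))
  have iρ : Integrable (gaussDen n) := integrable_gaussDen
  have hFbd : ∃ C, ∀ y, ‖F y‖ ≤ C := ⟨M, fun y => by rw [Real.norm_eq_abs]; exact hFub y⟩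
  have iFρ : Integrable (fun y => F y * gaussDen n y) :=
    iρ.bdd_mul hFc.aestronglyMeasurable (Filter.Eventually.of_forall hFbd.choose_spec)
  have hLc : Continuous (fun y => F y * Real.log (F y)) :=
    hFc.mul (hFc.log fun y => (hFpos y).ne')
  have iLρ : Integrable (fun y => (F y * Real.log (F y)) * gaussDen n y) := by
    refine iρ.bdd_mul hLc.aestronglyMeasurable
      (c := M * (|Real.log ε| + |Real.log M|)) (Filter.Eventually.of_forall fun y => ?_)
    have h1 : Real.log ε ≤ Real.log (F y) := Real.log_le_log hε (hFlb y)
    have h2 : Real.log (F y) ≤ Real.log M :=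
      Real.log_le_log (hFpos y) (le_trans (le_abs_self _) (hFub y))
    have h3 : |Real.log (F y)| ≤ |Real.log ε| + |Real.log M| := by
      rw [abs_le]
      constructor
      · linarith [neg_abs_le (Real.log ε), abs_nonneg (Real.log M)]
      · linarith [le_abs_self (Real.log M), abs_nonneg (Real.log ε)]
    rw [Real.norm_eq_abs, abs_mul]
    exact mul_le_mul (hFub y) h3 (abs_nonneg _) hMpos.le
  set P : ℝ := ∫ y, F y * gaussDen n y with hPdef
  have hPheat : heatSem n t φ x = P := rfl
  have hHeatL : heatSem n t (fun z => φ z * Real.log (φ z)) x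
      = ∫ y, (F y * Real.log (F y)) * gaussDen n y := rfl
  have hPeps : ε ≤ P := by
    have h0 : ∫ y, ε * gaussDen n y ≤ P :=
      integral_mono (iρ.const_mul ε) iFρ fun y =>
        mul_le_mul_of_nonneg_right (hFlb y) (gaussDen_pos y).le
    rwa [integral_const_mul, integral_gaussDen, mul_one] at h0
  have hPpos : 0 < P := lt_of_lt_of_le hε hPeps
  -- entropy lower bound (Jensen)
  have key4 : P * Real.log P ≤ ∫ y, (F y * Real.log (F y)) * gaussDen n y := by
    have hcalc : ∫ y, ((Real.log P) * (F y * gaussDen n y) + F y * gaussDen n y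
        - P * gaussDen n y)
        = Real.log P * P + P - P * 1 := by
      have j1 : Integrable (fun y => Real.log P * (F y * gaussDen n y)) :=
        iFρ.const_mul (Real.log P)
      have j2 : Integrable (fun y =>
          Real.log P * (F y * gaussDen n y) + F y * gaussDen n y) := j1.add iFρ
      have j3 : Integrable (fun y : EuclideanSpace ℝ (Fin n) => P * gaussDen n y) :=
        iρ.const_mul P
      rw [integral_sub j2 j3, integral_add j1 iFρ, integral_const_mul, integral_const_mul,
        integral_gaussDen]
    have hm : ∫ y, ((Real.log P) * (F y * gaussDen n y) + F y * gaussDen n y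
        - P * gaussDen n y) ≤ ∫ y, (F y * Real.log (F y)) * gaussDen n y := by
      refine integral_mono (((iFρ.const_mul _).add iFρ).sub (iρ.const_mul P)) iLρ fun y => ?_
      have hb := young_ineq (hFpos y) hPpos 0
      simp only [Real.exp_zero, mul_zero, mul_one] at hb
      have hbρ := mul_le_mul_of_nonneg_right hb (gaussDen_pos y).le
      nlinarith [hbρ]
    rw [hcalc] at hm
    linarith
  have hEntpos : 0 ≤ (∫ y, (F y * Real.log (F y)) * gaussDen n y) - P * Real.log P := by
    linarith
  by_cases hdiff : DifferentiableAt ℝ (fun z => Real.log (heatSem n t φ z)) x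
  case neg =>
    rw [gradient_eq_zero_of_not_differentiableAt hdiff]
    rw [hPheat, hHeatL]
    simp only [norm_zero]
    have : (0:ℝ) ≤ 2 / t := by positivity
    nlinarith [this, hEntpos]
  case pos =>
    set g : EuclideanSpace ℝ (Fin n) :=
      gradient (fun z => Real.log (heatSem n t φ z)) x with hgdef
    set c : EuclideanSpace ℝ (Fin n) := Real.sqrt t • g with hcdef
    set I1 : ℝ := ∫ y, F y * (⟪c, y⟫ * gaussDen n y) with hI1def
    have iFiρ : Integrable (fun y => F y * (⟪c, y⟫ * gaussDen n y)) :=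
      (integrable_inner_gaussDen c).bdd_mul hFc.aestronglyMeasurable (Filter.Eventually.of_forall hFbd.choose_spec)
    have iFeρ : ∀ d : EuclideanSpace ℝ (Fin n),
        Integrable (fun y => F y * (gaussDen n y * Real.exp ⟪d, y⟫)) := fun d =>
      (integrable_gaussDen_exp d).bdd_mul hFc.aestronglyMeasurable (Filter.Eventually.of_forall hFbd.choose_spec)
    -- entropy duality
    have key3 : I1 ≤ ((∫ y, (F y * Real.log (F y)) * gaussDen n y) - P * Real.log P)
        + P * (‖c‖ ^ 2 / 2) := by
      have hfint : Integrable (fun y => F y * (⟪c, y⟫ * gaussDen n y)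
          + ((Real.log P) * (F y * gaussDen n y) + F y * gaussDen n y)) :=
        iFiρ.add ((iFρ.const_mul _).add iFρ)
      have hgint : Integrable (fun y => (F y * Real.log (F y)) * gaussDen n y
          + ((‖c‖ ^ 2 / 2) * (F y * gaussDen n y)
            + (P * Real.exp (-‖c‖ ^ 2 / 2)) * (gaussDen n y * Real.exp ⟪c, y⟫))) :=
        iLρ.add ((iFρ.const_mul _).add ((integrable_gaussDen_exp c).const_mul _))
      have hm : ∫ y, (F y * (⟪c, y⟫ * gaussDen n y)
          + ((Real.log P) * (F y * gaussDen n y) + F y * gaussDen n y))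
          ≤ ∫ y, ((F y * Real.log (F y)) * gaussDen n y
          + ((‖c‖ ^ 2 / 2) * (F y * gaussDen n y)
            + (P * Real.exp (-‖c‖ ^ 2 / 2)) * (gaussDen n y * Real.exp ⟪c, y⟫))) := by
        refine integral_mono hfint hgint fun y => ?_
        have hb := young_ineq (hFpos y) hPpos (⟪c, y⟫ - ‖c‖ ^ 2 / 2)
        have hbρ := mul_le_mul_of_nonneg_right hb (gaussDen_pos y).le
        have he : Real.exp (⟪c, y⟫ - ‖c‖ ^ 2 / 2)
            = Real.exp ⟪c, y⟫ * Real.exp (-‖c‖ ^ 2 / 2) := by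
          rw [← Real.exp_add]; ring_nf
        rw [he] at hbρ
        nlinarith [hbρ]
      have hlhs : ∫ y, (F y * (⟪c, y⟫ * gaussDen n y)
          + ((Real.log P) * (F y * gaussDen n y) + F y * gaussDen n y))
          = I1 + (Real.log P * P + P) := by
        have j1 : Integrable (fun y => Real.log P * (F y * gaussDen n y)) :=
          iFρ.const_mul (Real.log P)
        have j2 : Integrable (fun y =>
            Real.log P * (F y * gaussDen n y) + F y * gaussDen n y) := j1.add iFρ
        rw [integral_add iFiρ j2, integral_add j1 iFρ, integral_const_mul]
      have hrhs : ∫ y, ((F y * Real.log (F y)) * gaussDen n y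
          + ((‖c‖ ^ 2 / 2) * (F y * gaussDen n y)
            + (P * Real.exp (-‖c‖ ^ 2 / 2)) * (gaussDen n y * Real.exp ⟪c, y⟫)))
          = (∫ y, (F y * Real.log (F y)) * gaussDen n y)
            + ((‖c‖ ^ 2 / 2) * P + P) := by
        have j1 : Integrable (fun y => (‖c‖ ^ 2 / 2) * (F y * gaussDen n y)) :=
          iFρ.const_mul (‖c‖ ^ 2 / 2)
        have j2 : Integrable (fun y =>
            (P * Real.exp (-‖c‖ ^ 2 / 2)) * (gaussDen n y * Real.exp ⟪c, y⟫)) :=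
          (integrable_gaussDen_exp c).const_mul (P * Real.exp (-‖c‖ ^ 2 / 2))
        have j3 : Integrable (fun y => (‖c‖ ^ 2 / 2) * (F y * gaussDen n y)
            + (P * Real.exp (-‖c‖ ^ 2 / 2)) * (gaussDen n y * Real.exp ⟪c, y⟫)) := j1.add j2
        rw [integral_add iLρ j3, integral_add j1 j2,
          integral_const_mul, integral_const_mul, integral_gaussDen_exp]
        congr 1
        rw [mul_assoc, ← Real.exp_add, show -‖c‖ ^ 2 / 2 + ‖c‖ ^ 2 / 2 = 0 by ring,
          Real.exp_zero, mul_one]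
      rw [hlhs, hrhs] at hm
      linarith
    -- translation formula
    have htrans : ∀ d : EuclideanSpace ℝ (Fin n),
        heatSem n t φ (x + Real.sqrt t • d)
          = Real.exp (-‖d‖ ^ 2 / 2) * ∫ y, F y * (gaussDen n y * Real.exp ⟪d, y⟫) := by
      intro d
      have e1 : heatSem n t φ (x + Real.sqrt t • d)
          = ∫ y, F (y + d) * gaussDen n y := by
        unfold heatSem gaussDen
        congr 1 with y
        rw [hFdef]
        congr 2
        rw [smul_add]
        abel
      have e2 : ∫ y, F (y + d) * gaussDen n y = ∫ y, F y * gaussDen n (y - d) := by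
        have h := integral_add_right_eq_self (μ := volume)
          (fun y => F y * gaussDen n (y - d)) d
        rw [← h]
        congr 1 with y
        rw [add_sub_cancel_right]
      have e3 : ∫ y, F y * gaussDen n (y - d)
          = ∫ y, Real.exp (-‖d‖ ^ 2 / 2) * (F y * (gaussDen n y * Real.exp ⟪d, y⟫)) := by
        congr 1 with y
        rw [gaussDen_sub d y]
        ring
      rw [e1, e2, e3, integral_const_mul]
    -- Jensen lower bound for the shifted integral
    have lowJ : ∀ s : ℝ, P * Real.exp (s * (I1 / P))
        ≤ ∫ y, F y * (gaussDen n y * Real.exp ⟪s • c, y⟫) := by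
      intro s
      have hup : Integrable (fun y => F y * (gaussDen n y * Real.exp ⟪s • c, y⟫)) := iFeρ _
      have hlowint : Integrable (fun y => Real.exp (s * (I1 / P)) *
          (F y * gaussDen n y + (s * (F y * (⟪c, y⟫ * gaussDen n y))
            - (s * (I1 / P)) * (F y * gaussDen n y)))) :=
        ((iFρ.add ((iFiρ.const_mul s).sub (iFρ.const_mul _))).const_mul _)
      have hm : ∫ y, Real.exp (s * (I1 / P)) *
          (F y * gaussDen n y + (s * (F y * (⟪c, y⟫ * gaussDen n y))
            - (s * (I1 / P)) * (F y * gaussDen n y)))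
          ≤ ∫ y, F y * (gaussDen n y * Real.exp ⟪s • c, y⟫) := by
        refine integral_mono hlowint hup fun y => ?_
        have h0 := Real.add_one_le_exp (s * ⟪c, y⟫ - s * (I1 / P))
        have h2 := mul_le_mul_of_nonneg_left h0 (Real.exp_pos (s * (I1 / P))).le
        rw [← Real.exp_add, show s * (I1 / P) + (s * ⟪c, y⟫ - s * (I1 / P)) = s * ⟪c, y⟫
          by ring] at h2
        have h4 := mul_le_mul_of_nonneg_left h2
          (mul_nonneg (hFpos y).le (gaussDen_pos y).le)
        have hsm : ⟪s • c, y⟫ = s * ⟪c, y⟫ := real_inner_smul_left c y s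
        rw [hsm]
        nlinarith [h4]
      have hI : ∫ y, Real.exp (s * (I1 / P)) *
          (F y * gaussDen n y + (s * (F y * (⟪c, y⟫ * gaussDen n y))
            - (s * (I1 / P)) * (F y * gaussDen n y)))
          = Real.exp (s * (I1 / P)) * (P + (s * I1 - (s * (I1 / P)) * P)) := by
        have j1 : Integrable (fun y => s * (F y * (⟪c, y⟫ * gaussDen n y))) :=
          iFiρ.const_mul s
        have j2 : Integrable (fun y => (s * (I1 / P)) * (F y * gaussDen n y)) :=
          iFρ.const_mul (s * (I1 / P))
        have j3 : Integrable (fun y => s * (F y * (⟪c, y⟫ * gaussDen n y))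
            - (s * (I1 / P)) * (F y * gaussDen n y)) := j1.sub j2
        rw [integral_const_mul, integral_add iFρ j3, integral_sub j1 j2, integral_const_mul,
          integral_const_mul]
      rw [hI] at hm
      have hsimp : s * (I1 / P) * P = s * I1 := by field_simp
      calc P * Real.exp (s * (I1 / P))
          = Real.exp (s * (I1 / P)) * (P + (s * I1 - (s * (I1 / P)) * P)) := by
            rw [hsimp]; ring
        _ ≤ _ := hm
    -- positivity of shifted integral
    have hJpos : ∀ s : ℝ, 0 < ∫ y, F y * (gaussDen n y * Real.exp ⟪s • c, y⟫) := fun s =>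
      lt_of_lt_of_le (by positivity) (lowJ s)
    set h : EuclideanSpace ℝ (Fin n) := Real.sqrt t • c with hhdef
    set q : ℝ → ℝ := fun s => Real.log (heatSem n t φ (x + s • h))
      - (Real.log P + s * (I1 / P) - s ^ 2 * (‖c‖ ^ 2 / 2)) with hqdef
    have hq : ∀ s, 0 ≤ q s := by
      intro s
      have hx' : x + s • h = x + Real.sqrt t • (s • c) := by
        rw [hhdef, smul_comm]
      have hlog : Real.log (heatSem n t φ (x + s • h))
          = -‖s • c‖ ^ 2 / 2
            + Real.log (∫ y, F y * (gaussDen n y * Real.exp ⟪s • c, y⟫)) := by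
        rw [hx', htrans (s • c), Real.log_mul (Real.exp_ne_zero _) (hJpos s).ne',
          Real.log_exp]
      have hnorm : ‖s • c‖ ^ 2 = s ^ 2 * ‖c‖ ^ 2 := by
        rw [norm_smul, Real.norm_eq_abs, mul_pow, sq_abs]
      have hlb2 : Real.log P + s * (I1 / P)
          ≤ Real.log (∫ y, F y * (gaussDen n y * Real.exp ⟪s • c, y⟫)) := by
        have := Real.log_le_log (by positivity) (lowJ s)
        rwa [Real.log_mul hPpos.ne' (Real.exp_ne_zero _), Real.log_exp] at this
      rw [hqdef]
      simp only []
      rw [hlog, hnorm]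
      linarith
    have hq0 : q 0 = 0 := by
      rw [hqdef]
      simp only [zero_smul, add_zero, zero_mul, zero_pow, mul_zero]
      rw [hPheat]
      ring
      -- may need adjustment
    have hinner : HasDerivAt (fun s : ℝ => x + s • h) h 0 := by
      simpa using ((hasDerivAt_id (0:ℝ)).smul_const h).const_add x
    have hcomp : HasDerivAt (fun s : ℝ => Real.log (heatSem n t φ (x + s • h)))
        ((fderiv ℝ (fun z => Real.log (heatSem n t φ z)) x) h) 0 := by
      have hf : HasFDerivAt (fun z => Real.log (heatSem n t φ z))
          (fderiv ℝ (fun z => Real.log (heatSem n t φ z)) x) (x + (0:ℝ) • h) := by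
        simpa using hdiff.hasFDerivAt
      exact hf.comp_hasDerivAt 0 hinner
    have hpoly : HasDerivAt (fun s : ℝ => Real.log P + s * (I1 / P)
        - s ^ 2 * (‖c‖ ^ 2 / 2)) (I1 / P) 0 := by
      have h1 : HasDerivAt (fun s : ℝ => Real.log P + s * (I1 / P)) (I1 / P) 0 := by
        simpa using ((hasDerivAt_id (0:ℝ)).mul_const (I1 / P)).const_add (Real.log P)
      have h2 : HasDerivAt (fun s : ℝ => s ^ 2 * (‖c‖ ^ 2 / 2)) 0 0 := by
        simpa using (hasDerivAt_pow 2 (0:ℝ)).mul_const (‖c‖ ^ 2 / 2)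
      have := h1.sub h2; rw [sub_zero] at this; exact this
    have hq' : HasDerivAt q
        ((fderiv ℝ (fun z => Real.log (heatSem n t φ z)) x) h - I1 / P) 0 :=
      hcomp.sub hpoly
    have hmin : IsLocalMin q 0 :=
      Filter.Eventually.of_forall fun s => by rw [hq0]; exact hq s
    have hD := hmin.hasDerivAt_eq_zero hq'
    have hfd : (fderiv ℝ (fun z => Real.log (heatSem n t φ z)) x) h = ⟪g, h⟫ := by
      rw [hdiff.hasGradientAt.hasFDerivAt.fderiv]
      simp [hgdef]
    have hgh : ⟪g, h⟫ = t * ‖g‖ ^ 2 := by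
      rw [hhdef, hcdef, real_inner_smul_right, real_inner_smul_right,
        real_inner_self_eq_norm_sq, ← mul_assoc, Real.mul_self_sqrt ht.le]
    have hI1 : I1 = t * ‖g‖ ^ 2 * P := by
      have : ⟪g, h⟫ - I1 / P = 0 := by rw [← hfd]; exact hD
      rw [hgh] at this
      field_simp at this
      linarith
    have hc2 : ‖c‖ ^ 2 = t * ‖g‖ ^ 2 := by
      rw [hcdef, norm_smul, Real.norm_eq_abs, mul_pow, sq_abs, Real.sq_sqrt ht.le]
    rw [hPheat, hHeatL]
    rw [hI1, hc2] at key3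
    rw [div_mul_eq_mul_div, le_div_iff₀ ht]
    nlinarith [key3, hPpos, ht]

end Main
end

section
/- Let $X$ be a geodesic metric space and $|\nabla \cdot|$ a strong upper gradient. Let $a > 0$, $b \ge 0$, and let $\varphi \in C^1([0,1], \mathrm{Lip}_b(X))$ satisfy $\partial_s \varphi_s + a|\nabla \varphi_s|^2 + b\varphi_s^2 \le 0$. Then for any $x_0, x_1 \in X$, $\varphi_1(x_1) - \varphi_0(x_0) \le \frac{1}{4a} d(x_0, x_1)^2$. -/
open Filter

/-!
Along a constant-speed geodesic `γ` from `x₀` to `x₁` consider `g t = φ_t(γ_t)`. At each time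
the right Dini derivative of `g` is at most `∂_s φ_s(γ_s) + |∇φ_s|(γ_s) d(x₀,x₁)`, and the
Hamilton–Jacobi inequality bounds this by `-a u² + u d ≤ d²/(4a)` with `u = |∇φ_s|(γ_s)`.
A continuous function with right Dini derivative at most `C` grows at most like `C t`.
-/

open Set Topology NNReal

theorem mul_sub_mul_sq_le {a : ℝ} (ha : 0 < a) (u d : ℝ) :
    u * d - a * u ^ 2 ≤ d ^ 2 / (4 * a) := by
  rw [le_div_iff₀ (by positivity)]
  nlinarith [sq_nonneg (2 * a * u - d)]

theorem sub_le_mul_sub_of_slope_right_lt {f : ℝ → ℝ} {a b C : ℝ} (hab : a ≤ b)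
    (hf : ContinuousOn f (Icc a b))
    (hslope : ∀ x ∈ Ico a b, ∀ r, C < r → ∀ᶠ z in 𝓝[>] x, slope f x z < r) :
    f b - f a ≤ C * (b - a) := by
  have hB : ∀ x, HasDerivAt (fun t => f a + C * (t - a)) C x := fun x => by
    simpa using ((hasDerivAt_id x).sub_const a).const_mul C |>.const_add (f a)
  have := image_le_of_liminf_slope_right_le_deriv_boundary (B' := fun _ => C) hf (by simp)
    (by fun_prop) (fun x _ => (hB x).hasDerivWithinAt)
    (fun x hx r hr => (hslope x hx r hr).frequently) (right_mem_Icc.2 hab)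
  linarith

theorem eventually_sub_le_mul_sub_of_continuousAt {Y : Type*} [TopologicalSpace Y]
    {F F' : ℝ → Y → ℝ} {s b c : ℝ} {y₀ : Y} {p : ℝ → Y} (hsb : s < b)
    (hF : ∀ y, ∀ t ∈ Icc s b, HasDerivAt (fun u => F u y) (F' t y) t)
    (hF' : ContinuousAt (fun q : ℝ × Y => F' q.1 q.2) (s, y₀))
    (hp : Tendsto p (𝓝[>] s) (𝓝 y₀)) (hc : F' s y₀ < c) :
    ∀ᶠ z in 𝓝[>] s, F z (p z) - F s (p z) ≤ c * (z - s) := by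
  have hev : ∀ᶠ q in 𝓝 s ×ˢ 𝓝 y₀, F' q.1 q.2 < c := by
    rw [← nhds_prod_eq]; exact hF'.eventually (eventually_lt_nhds hc)
  obtain ⟨pt, hpt, py, hpy, hsmall⟩ := eventually_prod_iff.1 hev
  obtain ⟨ε, hε, hball⟩ := Metric.eventually_nhds_iff.1 hpt
  filter_upwards [Ioo_mem_nhdsGT (lt_min hsb (lt_add_of_pos_right s hε)), hp.eventually hpy]
    with z hz hpz
  have hIcc : Icc s z ⊆ Icc s b := Icc_subset_Icc_right (hz.2.le.trans (min_le_left _ _))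
  obtain ⟨u, hu, hslope⟩ := exists_hasDerivAt_eq_slope (fun t => F t (p z)) (fun t => F' t (p z))
    hz.1 (fun t ht => (hF _ t (hIcc ht)).continuousAt.continuousWithinAt)
    (fun t ht => hF _ t (hIcc (Ioo_subset_Icc_self ht)))
  have hu_dist : dist u s < ε := by
    rw [Real.dist_eq, abs_of_pos (sub_pos.2 hu.1)]
    linarith [hu.2, hz.2.trans_le (min_le_right _ _)]
  have hFu : F' u (p z) < c := hsmall (hball hu_dist) hpz
  rw [eq_div_iff (sub_pos.2 hz.1).ne'] at hslope
  nlinarith [sub_pos.2 hz.1]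

theorem exists_dist_le_mul_of_continuousOn_deriv {Y : Type*} [TopologicalSpace Y]
    {F F' : ℝ → Y → ℝ} {a b : ℝ} {T : Set Y} (hT : IsCompact T)
    (hF : ∀ y, ∀ t ∈ Icc a b, HasDerivAt (fun u => F u y) (F' t y) t)
    (hF' : ContinuousOn (fun q : ℝ × Y => F' q.1 q.2) (Icc a b ×ˢ T)) :
    ∃ M : ℝ, ∀ y ∈ T, ∀ t ∈ Icc a b, ∀ u ∈ Icc a b, dist (F t y) (F u y) ≤ M * dist t u := by
  obtain ⟨M, hM⟩ := (isCompact_Icc.prod hT).exists_bound_of_continuousOn hF'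
  refine ⟨M, fun y hy t ht u hu => ?_⟩
  simpa only [dist_eq_norm] using (convex_Icc a b).norm_image_sub_le_of_norm_hasDerivWithin_le
    (fun v hv => (hF y v hv).hasDerivWithinAt) (fun v hv => hM (v, y) ⟨hv, hy⟩) hu ht

theorem LipschitzWith.eventually_abs_sub_le_of_lipSlope_lt {X : Type*} [MetricSpace X]
    {f : X → ℝ} {K : ℝ≥0} (hf : LipschitzWith K f) {x : X} {L : ℝ} (hL : lipSlope f x < L) :
    ∀ᶠ y in 𝓝 x, |f x - f y| ≤ L * dist x y := by
  have hbdd : IsBoundedUnder (· ≤ ·) (𝓝[≠] x) (fun y => |f x - f y| / dist x y) :=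
    isBoundedUnder_of ⟨K, fun y => div_le_of_le_mul₀ dist_nonneg K.2 (hf.dist_le_mul x y)⟩
  have hlt := eventually_nhdsWithin_iff.1 (eventually_lt_of_limsup_lt hL hbdd)
  filter_upwards [hlt] with y hy
  rcases eq_or_ne y x with rfl | hyx
  · simp
  · exact ((div_lt_iff₀ (dist_pos.2 hyx.symm)).1 (hy hyx)).le

theorem lipschitzOnWith_apply_path {X : Type*} [PseudoMetricSpace X] {F : ℝ → X → ℝ} {γ : ℝ → X}
    {S : Set ℝ} {K : ℝ≥0} {D M : ℝ}
    (hF : ∀ t ∈ S, LipschitzWith K (F t))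
    (hγ : ∀ t ∈ S, ∀ u ∈ S, dist (γ t) (γ u) ≤ D * dist t u)
    (htime : ∀ t ∈ S, ∀ u ∈ S, dist (F t (γ t)) (F u (γ t)) ≤ M * dist t u) :
    LipschitzOnWith (M + K * D).toNNReal (fun t => F t (γ t)) S :=
  LipschitzOnWith.of_dist_le' fun t ht u hu => calc
    dist (F t (γ t)) (F u (γ u)) ≤ dist (F t (γ t)) (F u (γ t)) + dist (F u (γ t)) (F u (γ u)) :=
      dist_triangle _ _ _
    _ ≤ M * dist t u + K * (D * dist t u) :=
      add_le_add (htime t ht u hu)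
        (((hF u hu).dist_le_mul _ _).trans (mul_le_mul_of_nonneg_left (hγ t ht u hu) K.2))
    _ = (M + K * D) * dist t u := by ring

theorem eventually_slope_apply_path_lt {X : Type*} [MetricSpace X] {F F' : ℝ → X → ℝ} {γ : ℝ → X}
    {K : ℝ≥0} {s b d r : ℝ} (hsb : s < b)
    (hF : ∀ x, ∀ t ∈ Icc s b, HasDerivAt (fun u => F u x) (F' t x) t)
    (hF' : ContinuousAt (fun q : ℝ × X => F' q.1 q.2) (s, γ s))
    (hLip : LipschitzWith K (F s))
    (hγ : ∀ z ∈ Ioo s b, dist (γ s) (γ z) = (z - s) * d)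
    (hr : F' s (γ s) + lipSlope (F s) (γ s) * d < r) :
    ∀ᶠ z in 𝓝[>] s, slope (fun t => F t (γ t)) s z < r := by
  set L := lipSlope (F s) (γ s)
  have hγs : Tendsto γ (𝓝[>] s) (𝓝 (γ s)) := by
    have hlin : Tendsto (fun z => (z - s) * d) (𝓝[>] s) (𝓝 0) := by
      simpa using ((by fun_prop : Continuous fun z : ℝ => (z - s) * d).tendsto s).mono_left
        nhdsWithin_le_nhds
    refine tendsto_iff_dist_tendsto_zero.2 (hlin.congr' ?_)
    filter_upwards [Ioo_mem_nhdsGT hsb] with z hz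
    rw [dist_comm, hγ z hz]
  have hlim : Tendsto (fun ε => F' s (γ s) + ε + (L + ε) * d) (𝓝[>] 0)
      (𝓝 (F' s (γ s) + L * d)) := by
    simpa using ((by fun_prop : Continuous fun ε : ℝ => F' s (γ s) + ε + (L + ε) * d).tendsto
      0).mono_left nhdsWithin_le_nhds
  obtain ⟨ε, hεr, hε⟩ := ((hlim.eventually (eventually_lt_nhds hr)).and self_mem_nhdsWithin).exists
  have htime := eventually_sub_le_mul_sub_of_continuousAt hsb hF hF' hγs
    (lt_add_of_pos_right _ (mem_Ioi.1 hε))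
  have hspace := hγs.eventually
    (hLip.eventually_abs_sub_le_of_lipSlope_lt (lt_add_of_pos_right L (mem_Ioi.1 hε)))
  -- Split `F z (γ z) - F s (γ s)` at `F s (γ z)` into a time and a space increment.
  filter_upwards [htime, hspace, Ioo_mem_nhdsGT hsb] with z htz hsz hz
  rw [hγ z hz, abs_sub_comm] at hsz
  have hzs : 0 < z - s := sub_pos.2 hz.1
  rw [slope_def_field, div_lt_iff₀ hzs]
  nlinarith [le_abs_self (F s (γ z) - F s (γ s))]

theorem stmt_17_general {X : Type*} [MetricSpace X]
    (hgeo : ∀ x y : X, ∃ γ : ℝ → X, γ 0 = x ∧ γ 1 = y ∧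
      ∀ s ∈ Set.Icc (0:ℝ) 1, ∀ t ∈ Set.Icc (0:ℝ) 1,
        dist (γ s) (γ t) = |s - t| * dist x y)
    (a b : ℝ) (ha : 0 < a) (hb : 0 ≤ b)
    (φ φ' : ℝ → X → ℝ)
    (hC1 : ∀ x : X, ∀ s ∈ Set.Icc (0:ℝ) 1, HasDerivAt (fun u => φ u x) (φ' s x) s)
    (hLip : ∃ K, ∀ s ∈ Set.Icc (0:ℝ) 1, LipschitzWith K (φ s))
    (hcont : Continuous fun pr : ℝ × X => φ' pr.1 pr.2)
    (hsub : ∀ s ∈ Set.Icc (0:ℝ) 1, ∀ x : X,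
      φ' s x + a * (lipSlope (φ s) x) ^ 2 + b * (φ s x) ^ 2 ≤ 0) :
    ∀ x₀ x₁ : X, φ 1 x₁ - φ 0 x₀ ≤ dist x₀ x₁ ^ 2 / (4 * a) := by
  intro x₀ x₁
  obtain ⟨K, hK⟩ := hLip
  obtain ⟨γ, hγ0, hγ1, hγ⟩ := hgeo x₀ x₁
  set d := dist x₀ x₁
  have hγLip : ∀ s ∈ Icc (0 : ℝ) 1, ∀ t ∈ Icc (0 : ℝ) 1, dist (γ s) (γ t) ≤ d * dist s t :=
    fun s hs t ht => by rw [hγ s hs t ht, Real.dist_eq, mul_comm]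
  have hγcont : ContinuousOn γ (Icc 0 1) := (LipschitzOnWith.of_dist_le' hγLip).continuousOn
  obtain ⟨M, hM⟩ := exists_dist_le_mul_of_continuousOn_deriv
    (isCompact_Icc.image_of_continuousOn hγcont) hC1 hcont.continuousOn
  have hg : ContinuousOn (fun t => φ t (γ t)) (Icc 0 1) :=
    (lipschitzOnWith_apply_path hK hγLip
      fun t ht u hu => hM (γ t) (mem_image_of_mem γ ht) t ht u hu).continuousOn
  have hslope : ∀ s ∈ Ico (0 : ℝ) 1, ∀ r, d ^ 2 / (4 * a) < r →
      ∀ᶠ z in 𝓝[>] s, slope (fun t => φ t (γ t)) s z < r := by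
    intro s hs r hr
    have hsIcc : s ∈ Icc (0 : ℝ) 1 := Ico_subset_Icc_self hs
    refine eventually_slope_apply_path_lt (d := d) hs.2
      (fun x t ht => hC1 x t ⟨hs.1.trans ht.1, ht.2⟩) hcont.continuousAt (hK s hsIcc)
      (fun z hz => ?_) (lt_of_le_of_lt ?_ hr)
    · rw [hγ s hsIcc z ⟨hs.1.trans hz.1.le, hz.2.le⟩, abs_sub_comm, abs_of_pos (sub_pos.2 hz.1)]
    · linarith [hsub s hsIcc (γ s), mul_sub_mul_sq_le ha (lipSlope (φ s) (γ s)) d,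
        mul_nonneg hb (sq_nonneg (φ s (γ s)))]
  simpa [hγ0, hγ1] using sub_le_mul_sub_of_slope_right_lt zero_le_one hg hslope

/-- In a geodesic metric space, any `C¹` family of bounded Lipschitz functions
`φ` satisfying the Hamilton–Jacobi inequality `∂_s φ_s + a|∇φ_s|² + bφ_s² ≤ 0`
satisfies `φ₁(x₁) - φ₀(x₀) ≤ d(x₀,x₁)²/(4a)`. -/
theorem stmt_17 {X : Type*} [MetricSpace X]
    (hgeo : ∀ x y : X, ∃ γ : ℝ → X, γ 0 = x ∧ γ 1 = y ∧
      ∀ s ∈ Set.Icc (0:ℝ) 1, ∀ t ∈ Set.Icc (0:ℝ) 1,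
        dist (γ s) (γ t) = |s - t| * dist x y)
    (a b : ℝ) (ha : 0 < a) (hb : 0 ≤ b)
    (φ φ' : ℝ → X → ℝ)
    (hC1 : ∀ x : X, ∀ s ∈ Set.Icc (0:ℝ) 1, HasDerivAt (fun u => φ u x) (φ' s x) s)
    (hLip : ∃ K, ∀ s ∈ Set.Icc (0:ℝ) 1, LipschitzWith K (φ s))
    (hbd : ∃ M, ∀ s ∈ Set.Icc (0:ℝ) 1, ∀ x : X, |φ s x| ≤ M)
    (hcont : Continuous fun pr : ℝ × X => φ' pr.1 pr.2)
    (hsub : ∀ s ∈ Set.Icc (0:ℝ) 1, ∀ x : X,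
      φ' s x + a * (lipSlope (φ s) x) ^ 2 + b * (φ s x) ^ 2 ≤ 0) :
    ∀ x₀ x₁ : X, φ 1 x₁ - φ 0 x₀ ≤ dist x₀ x₁ ^ 2 / (4 * a) :=
  stmt_17_general hgeo a b ha hb φ φ' hC1 hLip hcont hsub
end
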